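/- arXiv:2404.04288 — 7 statements merged into one kernel-verified Lean document; each statement's English description precedes it below -/
import Mathlib

section
/- Let z ∈ ℂ and let g : ℝ → ℂ be a Lebesgue measurable function such that t ↦ e^{-z t} g(t) is Lebesgue integrable on (0,∞). Let f : ℂ → ℂ satisfy f(w) = ∫₀^∞ e^{-w t} g(t) dt for every w ∈ ℂ with Re(w) ≥ Re(z). Then for every n ∈ ℕ and every real h > 0, Δ_h^n[f](z) = ∫₀^∞ e^{-z t} (e^{-h t} − 1)^n g(t) dt. -/
open MeasureTheory Filter Finset Topology

noncomputable section

/-!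
Expanding `Δ_h^n` of `f` and writing `e^{-(z + k h) t} = e^{-z t} (e^{-h t})^k`, the integrands
recombine by the binomial theorem into `e^{-z t} (e^{-h t} - 1)^n g(t)`. Interchanging the finite
sum with the integral is legitimate because `e^{-w t} g(t) = e^{-(w - z) t} · e^{-z t} g(t)` is
integrable on `(0, ∞)` whenever `Re z ≤ Re w`, the first factor being bounded by `1` there.
-/

theorem Complex.norm_exp_neg_mul_ofReal_le_one {u : ℂ} (hu : 0 ≤ u.re) {t : ℝ} (ht : 0 ≤ t) :
    ‖Complex.exp (-u * t)‖ ≤ 1 := by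
  rw [Complex.norm_exp, Real.exp_le_one_iff]
  simpa [Complex.mul_re] using mul_nonneg hu ht

theorem integrableOn_Ioi_exp_neg_mul_of_re_le {z w : ℂ} {g : ℝ → ℂ}
    (hint : IntegrableOn (fun t : ℝ => Complex.exp (-z * t) * g t) (Set.Ioi 0))
    (hzw : z.re ≤ w.re) :
    IntegrableOn (fun t : ℝ => Complex.exp (-w * t) * g t) (Set.Ioi 0) := by
  have hfactor : (fun t : ℝ => Complex.exp (-w * t) * g t)
      = fun t : ℝ => Complex.exp (-(w - z) * t) * (Complex.exp (-z * t) * g t) := by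
    funext t
    rw [← mul_assoc, ← Complex.exp_add]
    ring_nf
  rw [hfactor]
  refine hint.bdd_mul (c := 1) (by fun_prop) ?_
  filter_upwards [ae_restrict_mem measurableSet_Ioi] with t ht
  exact Complex.norm_exp_neg_mul_ofReal_le_one (by simpa using hzw) (le_of_lt ht)

theorem sum_choose_mul_neg_one_pow_mul_pow {R : Type*} [CommRing R] (x : R) (n : ℕ) :
    ∑ k ∈ range (n + 1), (n.choose k : R) * (-1) ^ (n - k) * x ^ k = (x - 1) ^ n := by
  rw [sub_eq_add_neg, add_pow]
  exact sum_congr rfl fun k _ => by ring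

theorem forward_difference_laplace_formula_general
    (z : ℂ) (g : ℝ → ℂ)
    (hint : IntegrableOn (fun t : ℝ => Complex.exp (-z * t) * g t) (Set.Ioi 0))
    (f : ℂ → ℂ)
    (hf : ∀ w : ℂ, z.re ≤ w.re →
      f w = ∫ t in Set.Ioi (0 : ℝ), Complex.exp (-w * t) * g t)
    (n : ℕ) (h : ℝ) (hh : 0 < h) :
    ∑ k ∈ Finset.range (n + 1),
        (n.choose k : ℂ) * (-1) ^ (n - k) * f (z + (k : ℂ) * (h : ℂ))
      = ∫ t in Set.Ioi (0 : ℝ),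
          Complex.exp (-z * t) * (Complex.exp (-(h : ℂ) * t) - 1) ^ n * g t := by
  have hshift (k : ℕ) : z.re ≤ (z + (k : ℂ) * (h : ℂ)).re := by
    simpa using mul_nonneg k.cast_nonneg hh.le
  have hexp (k : ℕ) (t : ℝ) : Complex.exp (-(z + (k : ℂ) * (h : ℂ)) * t)
      = Complex.exp (-z * t) * Complex.exp (-(h : ℂ) * t) ^ k := by
    rw [← Complex.exp_nat_mul, ← Complex.exp_add]
    ring_nf
  calc ∑ k ∈ range (n + 1), (n.choose k : ℂ) * (-1) ^ (n - k) * f (z + (k : ℂ) * (h : ℂ))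
      = ∑ k ∈ range (n + 1), ∫ t in Set.Ioi (0 : ℝ), (n.choose k : ℂ) * (-1) ^ (n - k) *
          (Complex.exp (-(z + (k : ℂ) * (h : ℂ)) * t) * g t) :=
        sum_congr rfl fun k _ => by rw [hf _ (hshift k), integral_const_mul]
    _ = ∫ t in Set.Ioi (0 : ℝ), ∑ k ∈ range (n + 1), (n.choose k : ℂ) * (-1) ^ (n - k) *
          (Complex.exp (-(z + (k : ℂ) * (h : ℂ)) * t) * g t) :=
        (integral_finsetSum _ fun k _ =>
          (integrableOn_Ioi_exp_neg_mul_of_re_le hint (hshift k)).const_mul _).symm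
    _ = ∫ t in Set.Ioi (0 : ℝ),
          Complex.exp (-z * t) * (Complex.exp (-(h : ℂ) * t) - 1) ^ n * g t := by
        congr 1 with t
        rw [← sum_choose_mul_neg_one_pow_mul_pow, mul_sum, sum_mul]
        exact sum_congr rfl fun k _ => by rw [hexp]; ring

theorem forward_difference_laplace_formula
    (z : ℂ) (g : ℝ → ℂ) (hg : Measurable g)
    (hint : IntegrableOn (fun t : ℝ => Complex.exp (-z * t) * g t) (Set.Ioi 0))
    (f : ℂ → ℂ)
    (hf : ∀ w : ℂ, z.re ≤ w.re →
      f w = ∫ t in Set.Ioi (0 : ℝ), Complex.exp (-w * t) * g t)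
    (n : ℕ) (h : ℝ) (hh : 0 < h) :
    ∑ k ∈ Finset.range (n + 1),
        (n.choose k : ℂ) * (-1) ^ (n - k) * f (z + (k : ℂ) * (h : ℂ))
      = ∫ t in Set.Ioi (0 : ℝ),
          Complex.exp (-z * t) * (Complex.exp (-(h : ℂ) * t) - 1) ^ n * g t :=
  forward_difference_laplace_formula_general z g hint f hf n h hh
end
end

section
/- Let m : ℝ → ℂ be Lebesgue measurable, let j ∈ ℕ, let b₀,…,b_j ∈ ℂ, N₀,…,N_j ∈ ℕ, and c₀,…,c_j ∈ ℝ with each c_k ≥ 0. Let z ∈ ℂ be such that t ↦ e^{-z t} m(t) is Lebesgue integrable on (0,∞), and suppose f : ℂ → ℂ satisfies f(w) = ∫₀^∞ e^{-w t} m(t) dt + ∑_{k=0}^{j} b_k e^{-c_k w} w^{N_k} for every w ∈ ℂ with Re(w) ≥ Re(z). Then for every real h > 0, lim_{n→∞} Δ_h^n[f](z) = 0. -/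
open MeasureTheory Filter Finset Topology

noncomputable section

/-! The `n`-th forward difference is linear and only sees the values `f (z + k h)`, `k ≤ n`, which
lie in the half-plane where `f` is given by the formula. Under the shift `w ↦ w + h` the kernel
`e^{-wt}` is multiplied by `e^{-ht}`, so `Δ_h^n` of the Laplace transform is
`∫ (e^{-ht} - 1)^n e^{-zt} m(t) dt`, which tends to `0` by dominated convergence since
`|e^{-ht} - 1| < 1` for `t > 0`. Likewise `e^{-cw}` is multiplied by `x = e^{-ch}`; combined with
Newton's interpolation formula this gives, for `n ≥ N`,
`Δ_h^n (e^{-cw} w^N) = e^{-cz} ∑_{i ≤ N} (n choose i) x^i (x - 1)^{n-i} Δ_h^i (w^N)(z)`, because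
`Δ_h^i (w^N) = 0` for `i > N`; each term tends to `0` as `|x - 1| < 1`. -/

open fwdDiff

section FwdDiff

variable {M R : Type*} [AddCommMonoid M] [CommRing R]

theorem sum_range_neg_one_pow_mul_choose_mul_choose_mul_pow (x : R) (n i : ℕ) :
    ∑ k ∈ range (n + 1), ((-1) ^ (n - k) * n.choose k * k.choose i : R) * x ^ k
      = n.choose i * x ^ i * (x - 1) ^ (n - i) := by
  rcases lt_or_ge n i with hni | hin
  · rw [Nat.choose_eq_zero_of_lt hni, Nat.cast_zero, zero_mul, zero_mul]
    refine sum_eq_zero fun k hk => ?_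
    simp [Nat.choose_eq_zero_of_lt ((mem_range.mp hk).trans_le hni)]
  obtain ⟨d, rfl⟩ := Nat.exists_eq_add_of_le hin
  rw [show i + d + 1 = i + (d + 1) by ring, sum_range_add,
    sum_eq_zero fun k hk => by rw [Nat.choose_eq_zero_of_lt (mem_range.mp hk)]; simp,
    zero_add, Nat.add_sub_cancel_left, sub_eq_add_neg, add_pow, mul_sum]
  refine sum_congr rfl fun l hl => ?_
  have hchoose : (i + d).choose (i + l) * (i + l).choose i = (i + d).choose i * d.choose l := by
    rw [Nat.choose_mul (by omega), Nat.add_sub_cancel_left, Nat.add_sub_cancel_left]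
  rw [show i + d - (i + l) = d - l by omega, mul_assoc _ _ ((i + l).choose i : R),
    ← Nat.cast_mul, hchoose]
  push_cast
  ring

theorem fwdDiff_iter_congr_of_shift_eq {G : Type*} [AddCommGroup G] {f g : M → G} {h y : M}
    {n : ℕ} (hfg : ∀ k ≤ n, f (y + k • h) = g (y + k • h)) :
    Δ_[h] ^[n] f y = Δ_[h] ^[n] g y := by
  simp only [fwdDiff_iter_eq_sum_shift]
  exact sum_congr rfl fun k hk => by rw [hfg k (Nat.lt_succ_iff.mp (mem_range.mp hk))]

theorem shift_eq_sum_range_fwdDiff_iter {f : M → R} {h y : M} {k n : ℕ} (hk : k ≤ n) :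
    f (y + k • h) = ∑ i ∈ range (n + 1), (k.choose i : R) * Δ_[h] ^[i] f y := by
  rw [shift_eq_sum_fwdDiff_iter h f k y]
  simp only [nsmul_eq_mul]
  refine sum_subset (range_subset_range.mpr (by omega)) fun i _ hi => ?_
  rw [Nat.choose_eq_zero_of_lt (by simpa using hi), Nat.cast_zero, zero_mul]

variable {φ : M → R} {x : R} {h y : M}

theorem fwdDiff_iter_of_shift_eq_pow_mul (hφ : ∀ k : ℕ, φ (y + k • h) = x ^ k * φ y) (n : ℕ) :
    Δ_[h] ^[n] φ y = (x - 1) ^ n * φ y := by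
  rw [fwdDiff_iter_eq_sum_shift, sub_eq_add_neg, add_pow, sum_mul]
  refine sum_congr rfl fun k _ => ?_
  rw [hφ, zsmul_eq_mul]
  push_cast
  ring

theorem fwdDiff_iter_mul_of_shift_eq_pow_mul (hφ : ∀ k : ℕ, φ (y + k • h) = x ^ k * φ y)
    (Q : M → R) (n : ℕ) :
    Δ_[h] ^[n] (fun w => φ w * Q w) y
      = φ y * ∑ i ∈ range (n + 1), n.choose i * x ^ i * (x - 1) ^ (n - i) * Δ_[h] ^[i] Q y := by
  calc Δ_[h] ^[n] (fun w => φ w * Q w) y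
      = ∑ k ∈ range (n + 1), ∑ i ∈ range (n + 1), φ y *
          (((-1) ^ (n - k) * n.choose k * k.choose i : R) * x ^ k) * Δ_[h] ^[i] Q y := by
        rw [fwdDiff_iter_eq_sum_shift]
        refine sum_congr rfl fun k hk => ?_
        rw [hφ, shift_eq_sum_range_fwdDiff_iter (f := Q) (Nat.lt_succ_iff.mp (mem_range.mp hk)),
          zsmul_eq_mul, mul_sum, mul_sum]
        refine sum_congr rfl fun i _ => ?_
        push_cast
        ring
    _ = φ y * ∑ i ∈ range (n + 1), n.choose i * x ^ i * (x - 1) ^ (n - i) * Δ_[h] ^[i] Q y := by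
        simp only [sum_comm (s := range (n + 1)), ← sum_mul, ← mul_sum,
          sum_range_neg_one_pow_mul_choose_mul_choose_mul_pow]
        rw [mul_sum]
        exact sum_congr rfl fun i _ => by ring

end FwdDiff

theorem fwdDiff_iter_eq_fwdDiff_iter_one_comp {R G : Type*} [CommRing R] [AddCommGroup G]
    (f : R → G) (h y : R) (n : ℕ) :
    Δ_[h] ^[n] f y = Δ_[1] ^[n] (fun r => f (y + r * h)) 0 := by
  simp only [fwdDiff_iter_eq_sum_shift, zero_add, nsmul_eq_mul, mul_one]

open Polynomial in
theorem fwdDiff_iter_pow_apply_eq_zero_of_lt {R : Type*} [CommRing R] (h y : R) {N i : ℕ}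
    (hNi : N < i) : Δ_[h] ^[i] (fun w => w ^ N) y = 0 := by
  have hP : (fun r => (y + r * h) ^ N) = ((C h * X + C y) ^ N).eval := by
    funext r
    simp only [eval_pow, eval_add, eval_mul, eval_C, eval_X]
    ring
  have hdeg : ((C h * X + C y) ^ N).natDegree < i :=
    (natDegree_pow_le_of_le N natDegree_linear_le).trans_lt (by omega)
  rw [fwdDiff_iter_eq_fwdDiff_iter_one_comp, hP, fwdDiff_iter_eq_zero_of_degree_lt hdeg,
    Pi.zero_apply]

theorem tendsto_choose_mul_pow_sub_atTop {R : Type*} [NormedRing R] [HasSummableGeomSeries R]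
    {r : R} (hr : ‖r‖ < 1) (i : ℕ) :
    Tendsto (fun n => (n.choose i : R) * r ^ (n - i)) atTop (𝓝 0) := by
  rw [← tendsto_add_atTop_iff_nat i]
  simpa using (summable_choose_mul_geometric_of_norm_lt_one i hr).tendsto_atTop_zero

theorem tendsto_fwdDiff_iter_mul_of_shift_eq_pow_mul {M R : Type*} [AddCommMonoid M]
    [NormedCommRing R] [HasSummableGeomSeries R] {φ Q : M → R} {x : R} {h y : M} {N : ℕ}
    (hφ : ∀ k : ℕ, φ (y + k • h) = x ^ k * φ y) (hx : ‖x - 1‖ < 1)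
    (hQ : ∀ i, N < i → Δ_[h] ^[i] Q y = 0) :
    Tendsto (fun n => Δ_[h] ^[n] (fun w => φ w * Q w) y) atTop (𝓝 0) := by
  have heq : ∀ᶠ n in atTop, φ y * ∑ i ∈ range (N + 1),
      n.choose i * (x - 1) ^ (n - i) * (x ^ i * Δ_[h] ^[i] Q y)
        = Δ_[h] ^[n] (fun w => φ w * Q w) y := by
    filter_upwards [eventually_ge_atTop N] with n hn
    rw [fwdDiff_iter_mul_of_shift_eq_pow_mul hφ]
    congr 1
    refine sum_subset (range_subset_range.mpr (by omega)) (fun i _ hi => ?_) |>.trans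
      (sum_congr rfl fun i _ => by ring)
    rw [hQ i (by simpa using hi), mul_zero, mul_zero]
  refine Tendsto.congr' heq ?_
  simpa using tendsto_const_nhds.mul
    (tendsto_finsetSum _ fun i _ => (tendsto_choose_mul_pow_sub_atTop hx i).mul_const _)

theorem Complex.norm_exp_neg_ofReal_sub_one_lt_one {s : ℝ} (hs : 0 ≤ s) :
    ‖Complex.exp (-(s : ℂ)) - 1‖ < 1 := by
  rw [← Complex.ofReal_neg, ← Complex.ofReal_exp, ← Complex.ofReal_one, ← Complex.ofReal_sub,
    Complex.norm_real, Real.norm_eq_abs, abs_sub_lt_iff]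
  constructor <;> linarith [Real.exp_pos (-s), Real.exp_le_one_iff.mpr (neg_nonpos.mpr hs)]

theorem tendsto_fwdDiff_iter_mul_exp_neg_mul_pow (b : ℂ) {c h : ℝ} (hc : 0 ≤ c) (hh : 0 < h)
    (z : ℂ) (N : ℕ) :
    Tendsto (fun n => Δ_[(h : ℂ)] ^[n] (fun w => b * Complex.exp (-(c : ℂ) * w) * w ^ N) z)
      atTop (𝓝 0) := by
  have hshift (k : ℕ) : b * Complex.exp (-(c : ℂ) * (z + k • (h : ℂ)))
      = Complex.exp (-((c * h : ℝ) : ℂ)) ^ k * (b * Complex.exp (-(c : ℂ) * z)) := by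
    rw [← Complex.exp_nat_mul, mul_left_comm, ← Complex.exp_add]
    push_cast
    ring_nf
  exact tendsto_fwdDiff_iter_mul_of_shift_eq_pow_mul hshift
    (Complex.norm_exp_neg_ofReal_sub_one_lt_one (mul_nonneg hc hh.le))
    fun i hi => fwdDiff_iter_pow_apply_eq_zero_of_lt _ _ hi

theorem fwdDiff_iter_integral {M α G : Type*} [AddCommMonoid M] [MeasurableSpace α]
    {μ : Measure α} [NormedAddCommGroup G] [NormedSpace ℝ G] {F : M → α → G} {h y : M} {n : ℕ}
    (hF : ∀ k ≤ n, Integrable (F (y + k • h)) μ) :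
    Δ_[h] ^[n] (fun w => ∫ a, F w a ∂μ) y = ∫ a, Δ_[h] ^[n] (fun w => F w a) y ∂μ := by
  simp only [fwdDiff_iter_eq_sum_shift, ← Int.cast_smul_eq_zsmul ℝ]
  rw [integral_finsetSum]
  · simp only [integral_smul]
  · exact fun k hk => (hF k (Nat.lt_succ_iff.mp (mem_range.mp hk))).smul _

theorem tendsto_integral_pow_mul_of_norm_lt_one {α 𝕜 : Type*} [MeasurableSpace α]
    {μ : Measure α} [RCLike 𝕜] {φ g : α → 𝕜} (hg : Integrable g μ)
    (hφ : AEStronglyMeasurable φ μ) (hφ_lt : ∀ᵐ a ∂μ, ‖φ a‖ < 1) :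
    Tendsto (fun n : ℕ => ∫ a, φ a ^ n * g a ∂μ) atTop (𝓝 0) := by
  have hlim := tendsto_integral_of_dominated_convergence (fun a => ‖g a‖)
    (fun n => (hφ.pow n).mul hg.aestronglyMeasurable) hg.norm
    (fun n => hφ_lt.mono fun a ha => by
      rw [Pi.mul_apply, Pi.pow_apply, norm_mul, norm_pow]
      exact mul_le_of_le_one_left (norm_nonneg _) (pow_le_one₀ (norm_nonneg _) ha.le))
    (hφ_lt.mono fun a ha => by
      simpa using (tendsto_pow_atTop_nhds_zero_of_norm_lt_one ha).mul_const (g a))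
  simpa using hlim

theorem tendsto_fwdDiff_iter_integral_exp_neg_mul {m : ℝ → ℂ} {z : ℂ}
    (hint : IntegrableOn (fun t : ℝ => Complex.exp (-z * t) * m t) (Set.Ioi 0)) {h : ℝ}
    (hh : 0 < h) :
    Tendsto (fun n => Δ_[(h : ℂ)] ^[n]
      (fun w => ∫ t in Set.Ioi (0 : ℝ), Complex.exp (-w * t) * m t) z) atTop (𝓝 0) := by
  set e : ℝ → ℂ := fun t => Complex.exp (-((h * t : ℝ) : ℂ))
  have hshift (t : ℝ) (k : ℕ) : Complex.exp (-(z + k • (h : ℂ)) * t) * m t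
      = e t ^ k * (Complex.exp (-z * t) * m t) := by
    rw [← mul_assoc, ← Complex.exp_nat_mul, ← Complex.exp_add]
    push_cast
    ring_nf
  have he_lt : ∀ t ∈ Set.Ioi (0 : ℝ), ‖e t - 1‖ < 1 := fun t ht =>
    Complex.norm_exp_neg_ofReal_sub_one_lt_one (mul_pos hh ht).le
  have he_le : ∀ t ∈ Set.Ioi (0 : ℝ), ‖e t‖ ≤ 1 := fun t ht => by
    simpa [e, Complex.norm_exp] using (mul_pos hh ht).le
  have he_meas : AEStronglyMeasurable e (volume.restrict (Set.Ioi 0)) := by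
    fun_prop
  have hint_shift (k : ℕ) :
      IntegrableOn (fun t : ℝ => Complex.exp (-(z + k • (h : ℂ)) * t) * m t) (Set.Ioi 0) := by
    simp_rw [hshift]
    exact hint.bdd_mul (he_meas.pow k) (ae_restrict_of_forall_mem measurableSet_Ioi
      fun t ht => by simpa using pow_le_one₀ (norm_nonneg _) (he_le t ht))
  have hΔ (n : ℕ) : Δ_[(h : ℂ)] ^[n]
      (fun w => ∫ t in Set.Ioi (0 : ℝ), Complex.exp (-w * t) * m t) z
        = ∫ t in Set.Ioi (0 : ℝ), (e t - 1) ^ n * (Complex.exp (-z * t) * m t) := by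
    rw [fwdDiff_iter_integral (F := fun w (t : ℝ) => Complex.exp (-w * t) * m t)
      fun k _ => hint_shift k]
    exact congrArg _ (funext fun t => fwdDiff_iter_of_shift_eq_pow_mul (hshift t) n)
  simp_rw [hΔ]
  exact tendsto_integral_pow_mul_of_norm_lt_one hint (he_meas.sub aestronglyMeasurable_const)
    (ae_restrict_of_forall_mem measurableSet_Ioi he_lt)

theorem forward_differences_tendsto_zero_general
    (m : ℝ → ℂ) (j : ℕ) (b : ℕ → ℂ) (N : ℕ → ℕ)
    (c : ℕ → ℝ) (hc : ∀ k ≤ j, 0 ≤ c k) (z : ℂ)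
    (hint : IntegrableOn (fun t : ℝ => Complex.exp (-z * t) * m t) (Set.Ioi 0))
    (f : ℂ → ℂ)
    (hf : ∀ w : ℂ, z.re ≤ w.re →
      f w = (∫ t in Set.Ioi (0 : ℝ), Complex.exp (-w * t) * m t)
        + ∑ k ∈ Finset.range (j + 1), b k * Complex.exp (-(c k : ℂ) * w) * w ^ (N k))
    (h : ℝ) (hh : 0 < h) :
    Tendsto (fun n : ℕ =>
        ∑ k ∈ Finset.range (n + 1),
          (n.choose k : ℂ) * (-1) ^ (n - k) * f (z + (k : ℂ) * (h : ℂ)))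
      atTop (nhds 0) := by
  set L : ℂ → ℂ := fun w => ∫ t in Set.Ioi (0 : ℝ), Complex.exp (-w * t) * m t
  set E : ℕ → ℂ → ℂ := fun l w => b l * Complex.exp (-(c l : ℂ) * w) * w ^ (N l)
  have hfE (k : ℕ) :
      f (z + k • (h : ℂ)) = (L + ∑ l ∈ range (j + 1), E l) (z + k • (h : ℂ)) := by
    have hre : z.re ≤ (z + k • (h : ℂ)).re := by simpa using mul_nonneg k.cast_nonneg hh.le
    rw [hf _ hre, Pi.add_apply, Finset.sum_apply]
  have hΔ (n : ℕ) : ∑ k ∈ range (n + 1), (n.choose k : ℂ) * (-1) ^ (n - k) * f (z + k * h)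
      = Δ_[(h : ℂ)] ^[n] L z + ∑ l ∈ range (j + 1), Δ_[(h : ℂ)] ^[n] (E l) z := by
    rw [← Finset.sum_apply, ← Pi.add_apply, ← fwdDiff_iter_finsetSum, ← fwdDiff_iter_add,
      ← fwdDiff_iter_congr_of_shift_eq fun k _ => hfE k, fwdDiff_iter_eq_sum_shift]
    exact sum_congr rfl fun k _ => by simp [zsmul_eq_mul, mul_comm]
  simp_rw [hΔ]
  simpa only [sum_const_zero, add_zero] using
    (tendsto_fwdDiff_iter_integral_exp_neg_mul hint hh).add <| tendsto_finsetSum _ fun l hl =>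
      tendsto_fwdDiff_iter_mul_exp_neg_mul_pow (b l) (hc l (Nat.lt_succ_iff.mp (mem_range.mp hl)))
        hh z (N l)

theorem forward_differences_tendsto_zero
    (m : ℝ → ℂ) (hm : Measurable m) (j : ℕ) (b : ℕ → ℂ) (N : ℕ → ℕ)
    (c : ℕ → ℝ) (hc : ∀ k ≤ j, 0 ≤ c k) (z : ℂ)
    (hint : IntegrableOn (fun t : ℝ => Complex.exp (-z * t) * m t) (Set.Ioi 0))
    (f : ℂ → ℂ)
    (hf : ∀ w : ℂ, z.re ≤ w.re →
      f w = (∫ t in Set.Ioi (0 : ℝ), Complex.exp (-w * t) * m t)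
        + ∑ k ∈ Finset.range (j + 1), b k * Complex.exp (-(c k : ℂ) * w) * w ^ (N k))
    (h : ℝ) (hh : 0 < h) :
    Tendsto (fun n : ℕ =>
        ∑ k ∈ Finset.range (n + 1),
          (n.choose k : ℂ) * (-1) ^ (n - k) * f (z + (k : ℂ) * (h : ℂ)))
      atTop (nhds 0) :=
  forward_differences_tendsto_zero_general m j b N c hc z hint f hf h hh
end
end

section
/- Let m : ℝ → ℂ be Lebesgue measurable, let j ∈ ℕ, let b₀,…,b_j ∈ ℂ, N₀,…,N_j ∈ ℕ, and c₀,…,c_j ∈ ℝ with each c_k ≥ 0. Let z ∈ ℂ be such that t ↦ e^{z t} m(t) is Lebesgue integrable on (0,∞), and suppose g : ℂ → ℂ satisfies g(w) = ∫₀^∞ e^{-w t} m(t) dt + ∑_{k=0}^{j} b_k e^{-c_k w} w^{N_k} for every w ∈ ℂ with Re(w) ≥ −Re(z). Define f : ℂ → ℂ by f(t) = g(−t). Then for every real h > 0, lim_{n→∞} ∇_h^n[f](z) = 0. -/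
open MeasureTheory Filter Finset Topology

noncomputable section

/-! The sum is the alternating binomial transform `∑ (n choose k) (-1)^k u k` of
`u k = f (z - k h) = g (k h - z)`, and this transform is linear in `u`. Inserting the
representation of `g`, the Laplace part becomes `∫ e^{zt} m(t) (1 - e^{-ht})^n dt`, which tends to
`0` by dominated convergence because `|1 - e^{-ht}| < 1` for `t > 0`. Each remaining term is the
transform of `k ↦ q^k P(k)` with `q = e^{-c h} ∈ (0, 1]` and `P` a polynomial. From
`k (n choose k) = n (n-1 choose k-1)` one gets a recursion in the degree of `P` which, starting
from the transform `(1 - q)^n` of `q^k`, shows that these transforms decay faster than any power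
of `n`. -/

open Asymptotics Polynomial

section AlternatingBinomialSum

variable {R : Type*} [CommRing R]

/-- `alternatingBinomialSum n (fun k => f (z - k * h))` is the backward difference `∇_h^n f z`. -/
def alternatingBinomialSum (n : ℕ) (u : ℕ → R) : R :=
  ∑ k ∈ range (n + 1), (n.choose k : R) * (-1) ^ k * u k

theorem alternatingBinomialSum_const_mul (n : ℕ) (a : R) (u : ℕ → R) :
    alternatingBinomialSum n (fun k => a * u k) = a * alternatingBinomialSum n u := by
  simp only [alternatingBinomialSum, mul_sum]
  exact sum_congr rfl fun _ _ => by ring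

theorem alternatingBinomialSum_add (n : ℕ) (u v : ℕ → R) :
    alternatingBinomialSum n (fun k => u k + v k) =
      alternatingBinomialSum n u + alternatingBinomialSum n v := by
  simp only [alternatingBinomialSum, mul_add, sum_add_distrib]

theorem alternatingBinomialSum_sum {ι : Type*} (s : Finset ι) (n : ℕ) (u : ι → ℕ → R) :
    alternatingBinomialSum n (fun k => ∑ i ∈ s, u i k) =
      ∑ i ∈ s, alternatingBinomialSum n (u i) := by
  simp only [alternatingBinomialSum, mul_sum]
  exact sum_comm

theorem alternatingBinomialSum_pow (n : ℕ) (x : R) :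
    alternatingBinomialSum n (fun k => x ^ k) = (1 - x) ^ n := by
  rw [sub_eq_neg_add, add_pow, alternatingBinomialSum]
  exact sum_congr rfl fun k _ => by rw [neg_pow]; ring

theorem alternatingBinomialSum_succ_natCast_mul (n : ℕ) (u : ℕ → R) :
    alternatingBinomialSum (n + 1) (fun k => (k : R) * u k) =
      -((n + 1 : R) * alternatingBinomialSum n (fun k => u (k + 1))) := by
  rw [alternatingBinomialSum, sum_range_succ', alternatingBinomialSum, mul_sum, ← sum_neg_distrib]
  simp only [Nat.cast_zero, zero_mul, mul_zero, add_zero]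
  refine sum_congr rfl fun k _ => ?_
  have h := congrArg (Nat.cast : ℕ → R) (Nat.add_one_mul_choose_eq n k)
  push_cast at h ⊢
  linear_combination ((-1 : R) ^ k * u (k + 1)) * h

end AlternatingBinomialSum

section SuperpolynomialDecay

variable {R : Type*} [CommRing R] [TopologicalSpace R] [IsTopologicalRing R]

theorem Asymptotics.SuperpolynomialDecay.finset_sum {α ι : Type*} {l : Filter α} {k : α → R}
    (s : Finset ι) {f : ι → α → R} (hf : ∀ i ∈ s, SuperpolynomialDecay l k (f i)) :
    SuperpolynomialDecay l k fun x => ∑ i ∈ s, f i x := by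
  simpa only [← Finset.sum_apply] using
    Finset.sum_induction f (SuperpolynomialDecay l k) (fun _ _ => .add)
      (superpolynomialDecay_zero l k) hf

theorem Asymptotics.SuperpolynomialDecay.of_comp_succ {u : ℕ → R}
    (h : SuperpolynomialDecay atTop (fun n : ℕ => (n : R)) fun n => u (n + 1)) :
    SuperpolynomialDecay atTop (fun n : ℕ => (n : R)) u := fun d => by
  rw [← tendsto_add_atTop_iff_nat 1]
  have := h.polynomial_mul ((X + 1) ^ d) 0
  simpa using this

end SuperpolynomialDecay

section NormedCommRing

variable {R : Type*} [NormedCommRing R] {q : R}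

theorem superpolynomialDecay_pow_of_norm_lt_one (hq : ‖q‖ < 1) :
    SuperpolynomialDecay atTop (fun n : ℕ => (n : R)) fun n => q ^ n := fun d =>
  tendsto_zero_iff_norm_tendsto_zero.mpr
    (summable_norm_pow_mul_geometric_of_norm_lt_one d hq).tendsto_atTop_zero

theorem geom_mul_pow_succ (k r : ℕ) :
    q ^ (k + 1) * ((k + 1 : ℕ) : R) ^ r =
      ∑ s ∈ range (r + 1), q * (r.choose s : R) * (q ^ k * (k : R) ^ s) := by
  rw [Nat.cast_succ, add_pow, mul_sum]
  exact sum_congr rfl fun s _ => by ring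

theorem superpolynomialDecay_alternatingBinomialSum_geom_mul_pow (hq : ‖1 - q‖ < 1) (r : ℕ) :
    SuperpolynomialDecay atTop (fun n : ℕ => (n : R))
      fun n => alternatingBinomialSum n fun k => q ^ k * (k : R) ^ r := by
  induction r using Nat.strong_induction_on with
  | _ r ih =>
    match r with
    | 0 => simpa only [pow_zero, mul_one, alternatingBinomialSum_pow] using
        superpolynomialDecay_pow_of_norm_lt_one hq
    | r + 1 =>
      refine SuperpolynomialDecay.of_comp_succ ?_
      -- the factor `-(n + 1)` is written as a polynomial in `n` for `polynomial_mul`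
      have hrec : ∀ n : ℕ, (alternatingBinomialSum (n + 1) fun k => q ^ k * (k : R) ^ (r + 1)) =
          (-(X + 1) : R[X]).eval (n : R) * ∑ s ∈ range (r + 1), q * (r.choose s : R) *
            alternatingBinomialSum n fun k => q ^ k * (k : R) ^ s := fun n => by
        have hk : ∀ k : ℕ, q ^ k * (k : R) ^ (r + 1) = k * (q ^ k * (k : R) ^ r) :=
          fun k => by ring
        simp only [hk, alternatingBinomialSum_succ_natCast_mul, geom_mul_pow_succ,
          alternatingBinomialSum_sum, alternatingBinomialSum_const_mul, eval_neg, eval_add,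
          eval_X, eval_one, neg_mul]
      refine SuperpolynomialDecay.congr ?_ fun n => (hrec n).symm
      exact (SuperpolynomialDecay.finset_sum _ fun s hs =>
        (ih s (mem_range.mp hs)).const_mul _).polynomial_mul _

theorem tendsto_alternatingBinomialSum_geom_mul_eval (hq : ‖1 - q‖ < 1) (P : R[X]) :
    Tendsto (fun n => alternatingBinomialSum n fun k => q ^ k * P.eval (k : R)) atTop (𝓝 0) := by
  simp only [eval_eq_sum_range, mul_sum, mul_left_comm (q ^ _), alternatingBinomialSum_sum,
    alternatingBinomialSum_const_mul]
  have := (SuperpolynomialDecay.finset_sum (range (P.natDegree + 1)) fun i _ =>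
    (superpolynomialDecay_alternatingBinomialSum_geom_mul_pow hq i).const_mul (P.coeff i)) 0
  simpa using this

end NormedCommRing

section Integral

variable {α 𝕜 : Type*} [RCLike 𝕜] [MeasurableSpace α] {μ : Measure α} {F g : α → 𝕜}

theorem alternatingBinomialSum_integral_mul_pow (hF : Integrable F μ)
    (hg : AEStronglyMeasurable g μ) (hg1 : ∀ᵐ t ∂μ, ‖g t‖ ≤ 1) (n : ℕ) :
    (alternatingBinomialSum n fun k => ∫ t, F t * g t ^ k ∂μ) = ∫ t, F t * (1 - g t) ^ n ∂μ := by
  have hint (k : ℕ) : Integrable (fun t => F t * g t ^ k) μ :=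
    hF.mul_bdd (hg.pow k) (hg1.mono fun t ht => by
      rw [norm_pow]; exact pow_le_one₀ (norm_nonneg _) ht)
  simp only [alternatingBinomialSum, ← integral_const_mul]
  rw [← integral_finsetSum _ fun k _ => (hint k).const_mul _]
  refine integral_congr_ae (ae_of_all _ fun t => ?_)
  exact (alternatingBinomialSum_const_mul n (F t) _).trans (by rw [alternatingBinomialSum_pow])

theorem tendsto_integral_mul_pow_of_norm_lt_one (hF : Integrable F μ)
    (hg : AEStronglyMeasurable g μ) (hg1 : ∀ᵐ t ∂μ, ‖g t‖ < 1) :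
    Tendsto (fun n : ℕ => ∫ t, F t * g t ^ n ∂μ) atTop (𝓝 0) := by
  have hbound (n : ℕ) : ∀ᵐ t ∂μ, ‖F t * g t ^ n‖ ≤ ‖F t‖ := hg1.mono fun t ht => by
    rw [norm_mul, norm_pow]
    exact mul_le_of_le_one_right (norm_nonneg _) (pow_le_one₀ (norm_nonneg _) ht.le)
  have hlim : ∀ᵐ t ∂μ, Tendsto (fun n : ℕ => F t * g t ^ n) atTop (𝓝 0) := hg1.mono fun t ht => by
    simpa using (tendsto_pow_atTop_nhds_zero_of_norm_lt_one ht).const_mul (F t)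
  simpa using tendsto_integral_of_dominated_convergence _
    (fun n => hF.aestronglyMeasurable.mul (hg.pow n)) hF.norm hbound hlim

end Integral

theorem norm_ofReal_exp_neg_le_one {x : ℝ} (hx : 0 ≤ x) : ‖(Real.exp (-x) : ℂ)‖ ≤ 1 := by
  rw [Complex.norm_real, Real.norm_of_nonneg (Real.exp_pos _).le, Real.exp_le_one_iff]
  linarith

theorem norm_one_sub_ofReal_exp_neg_lt_one {x : ℝ} (hx : 0 ≤ x) :
    ‖1 - (Real.exp (-x) : ℂ)‖ < 1 := by
  have hle : Real.exp (-x) ≤ 1 := Real.exp_le_one_iff.mpr (by linarith)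
  rw [← Complex.ofReal_one, ← Complex.ofReal_sub, Complex.norm_real,
    Real.norm_of_nonneg (sub_nonneg.mpr hle)]
  linarith [Real.exp_pos (-x)]

theorem Complex.exp_sub_natCast_mul_mul (z : ℂ) (h t : ℝ) (k : ℕ) :
    Complex.exp ((z - k * h) * t) = Complex.exp (z * t) * (Real.exp (-(h * t)) : ℂ) ^ k := by
  rw [Complex.ofReal_exp, ← Complex.exp_nat_mul, ← Complex.exp_add]
  push_cast
  ring_nf

theorem tendsto_alternatingBinomialSum_integral_mul_exp_neg_mul {F : ℝ → ℂ}
    (hF : IntegrableOn F (Set.Ioi 0)) {h : ℝ} (hh : 0 < h) :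
    Tendsto (fun n => alternatingBinomialSum n fun k =>
      ∫ t in Set.Ioi (0 : ℝ), F t * (Real.exp (-(h * t)) : ℂ) ^ k) atTop (𝓝 0) := by
  have hE : ∀ᵐ t ∂(volume.restrict (Set.Ioi (0 : ℝ))),
      ‖(Real.exp (-(h * t)) : ℂ)‖ ≤ 1 ∧ ‖1 - (Real.exp (-(h * t)) : ℂ)‖ < 1 := by
    filter_upwards [ae_restrict_mem measurableSet_Ioi] with t ht
    have hht : 0 ≤ h * t := (mul_pos hh ht).le
    exact ⟨norm_ofReal_exp_neg_le_one hht, norm_one_sub_ofReal_exp_neg_lt_one hht⟩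
  have hE_meas : AEStronglyMeasurable (fun t : ℝ => (Real.exp (-(h * t)) : ℂ))
      (volume.restrict (Set.Ioi 0)) := by fun_prop
  simp only [alternatingBinomialSum_integral_mul_pow hF hE_meas (hE.mono fun _ => And.left)]
  exact tendsto_integral_mul_pow_of_norm_lt_one hF (aestronglyMeasurable_const.sub hE_meas)
    (hE.mono fun _ => And.right)

theorem backward_differences_tendsto_zero_general
    (m : ℝ → ℂ) (j : ℕ) (b : ℕ → ℂ) (N : ℕ → ℕ)
    (c : ℕ → ℝ) (hc : ∀ k ≤ j, 0 ≤ c k) (z : ℂ)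
    (hint : IntegrableOn (fun t : ℝ => Complex.exp (z * t) * m t) (Set.Ioi 0))
    (g : ℂ → ℂ)
    (hg : ∀ w : ℂ, (-z).re ≤ w.re →
      g w = (∫ t in Set.Ioi (0 : ℝ), Complex.exp (-w * t) * m t)
        + ∑ k ∈ Finset.range (j + 1), b k * Complex.exp (-(c k : ℂ) * w) * w ^ (N k))
    (f : ℂ → ℂ) (hfg : ∀ t : ℂ, f t = g (-t))
    (h : ℝ) (hh : 0 < h) :
    Tendsto (fun n : ℕ =>
        ∑ k ∈ Finset.range (n + 1),
          (n.choose k : ℂ) * (-1) ^ k * f (z - (k : ℂ) * (h : ℂ)))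
      atTop (nhds 0) := by
  set q : ℕ → ℂ := fun i => (Real.exp (-(h * c i)) : ℂ)
  set P : ℕ → ℂ[X] := fun i => (C (h : ℂ) * X - C z) ^ N i
  have hshift (k : ℕ) : f (z - k * h) =
      (∫ t in Set.Ioi (0 : ℝ), Complex.exp (z * t) * m t * (Real.exp (-(h * t)) : ℂ) ^ k)
      + ∑ i ∈ range (j + 1), b i * Complex.exp (z * c i) * (q i ^ k * (P i).eval (k : ℂ)) := by
    rw [hfg, hg _ (by simp; positivity), neg_neg]
    congr 1
    · refine integral_congr_ae (ae_of_all _ fun t => ?_)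
      simp only [Complex.exp_sub_natCast_mul_mul]
      ring
    · refine sum_congr rfl fun i _ => ?_
      rw [neg_mul_neg, mul_comm (c i : ℂ), Complex.exp_sub_natCast_mul_mul]
      simp only [P, eval_pow, eval_sub, eval_mul, eval_C, eval_X]
      ring
  have hq (i) (hi : i ∈ range (j + 1)) : ‖1 - q i‖ < 1 := norm_one_sub_ofReal_exp_neg_lt_one
    (mul_nonneg hh.le (hc i (Nat.lt_succ_iff.mp (mem_range.mp hi))))
  change Tendsto (fun n => alternatingBinomialSum n fun k => f (z - k * h)) atTop (𝓝 0)
  simp only [hshift, alternatingBinomialSum_add, alternatingBinomialSum_sum,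
    alternatingBinomialSum_const_mul]
  simpa using (tendsto_alternatingBinomialSum_integral_mul_exp_neg_mul hint hh).add
    (tendsto_finsetSum _ fun i hi =>
      (tendsto_alternatingBinomialSum_geom_mul_eval (hq i hi) (P i)).const_mul _)

theorem backward_differences_tendsto_zero
    (m : ℝ → ℂ) (hm : Measurable m) (j : ℕ) (b : ℕ → ℂ) (N : ℕ → ℕ)
    (c : ℕ → ℝ) (hc : ∀ k ≤ j, 0 ≤ c k) (z : ℂ)
    (hint : IntegrableOn (fun t : ℝ => Complex.exp (z * t) * m t) (Set.Ioi 0))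
    (g : ℂ → ℂ)
    (hg : ∀ w : ℂ, (-z).re ≤ w.re →
      g w = (∫ t in Set.Ioi (0 : ℝ), Complex.exp (-w * t) * m t)
        + ∑ k ∈ Finset.range (j + 1), b k * Complex.exp (-(c k : ℂ) * w) * w ^ (N k))
    (f : ℂ → ℂ) (hfg : ∀ t : ℂ, f t = g (-t))
    (h : ℝ) (hh : 0 < h) :
    Tendsto (fun n : ℕ =>
        ∑ k ∈ Finset.range (n + 1),
          (n.choose k : ℂ) * (-1) ^ k * f (z - (k : ℂ) * (h : ℂ)))
      atTop (nhds 0) :=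
  backward_differences_tendsto_zero_general m j b N c hc z hint g hg f hfg h hh
end
end

section
/- Let P, Q be polynomials with real coefficients, Q ≠ 0, and regard them as complex polynomials. Let z₀ ∈ ℂ satisfy Re(z₀) > 0 and Re(z₀) > Re(σ) for every complex root σ of Q. Define R : ℂ → ℂ by R(w) = P(w)/Q(w). Then for every z ∈ ℂ with Re(z) > Re(z₀), the Newton series ∑_{k=0}^{∞} C(z − z₀, k) · Δ^k[R](z₀) converges and its sum equals R(z). -/
open MeasureTheory Filter Finset Topology

noncomputable section

/-- The generalized binomial coefficient `C(w, k) = w (w-1) ⋯ (w-k+1) / k!`. -/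
def genBinom (w : ℂ) (k : ℕ) : ℂ :=
  (∏ i ∈ Finset.range k, (w - (i : ℂ))) / (k.factorial : ℂ)

/-- The k-th forward difference (step 1) of `f` at `z₀`. -/
def fwdDiff1 (f : ℂ → ℂ) (z₀ : ℂ) (k : ℕ) : ℂ :=
  ∑ i ∈ Finset.range (k + 1), (k.choose i : ℂ) * (-1) ^ (k - i) * f (z₀ + (i : ℂ))

/-!
The Newton series is linear in `f`, and for a polynomial it terminates and interpolates it on
`z₀ + ℕ`, hence everywhere. By partial fractions it remains to treat `(w - σ)^(-(m+1))` with
`Re σ < Re z₀`. For `m = 0` the remainder after `n` terms is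
`∏_{i<n} (z₀ - z + i) / ((z - σ) ∏_{i<n} (z₀ - σ + i))`, which is `O(n ^ Re (z₀ - z))` by Euler's
limit formula for `Γ`, locally uniformly in `σ`. Higher-order poles follow by differentiating the
remainder `m` times in `σ`, since locally uniform limits of holomorphic functions may be
differentiated.
-/

open Polynomial
open scoped Nat

lemma fwdDiff1_eq_iterate (f : ℂ → ℂ) (z₀ : ℂ) (k : ℕ) :
    fwdDiff1 f z₀ k = (fwdDiff 1)^[k] f z₀ := by
  rw [fwdDiff_iter_eq_sum_shift, fwdDiff1]
  refine sum_congr rfl fun i _ => ?_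
  simp only [nsmul_eq_mul, mul_one, zsmul_eq_mul]
  push_cast
  ring

def newtonPartialSum (f : ℂ → ℂ) (z₀ z : ℂ) (n : ℕ) : ℂ :=
  ∑ k ∈ range n, genBinom (z - z₀) k * fwdDiff1 f z₀ k

def HasNewtonSeries (f : ℂ → ℂ) (z₀ z : ℂ) : Prop :=
  Tendsto (newtonPartialSum f z₀ z) atTop (𝓝 (f z))

section NewtonSeries

variable {f g : ℂ → ℂ} {z₀ z : ℂ}

lemma newtonPartialSum_add (n : ℕ) :
    newtonPartialSum (f + g) z₀ z n = newtonPartialSum f z₀ z n + newtonPartialSum g z₀ z n := by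
  simp only [newtonPartialSum, fwdDiff1_eq_iterate, fwdDiff_iter_add, Pi.add_apply, mul_add,
    sum_add_distrib]

lemma newtonPartialSum_smul (c : ℂ) (n : ℕ) :
    newtonPartialSum (c • f) z₀ z n = c * newtonPartialSum f z₀ z n := by
  simp only [newtonPartialSum, fwdDiff1_eq_iterate, fwdDiff_iter_const_smul, Pi.smul_apply,
    smul_eq_mul, mul_sum, mul_left_comm c]

lemma newtonPartialSum_congr (h : ∀ i : ℕ, f (z₀ + i) = g (z₀ + i)) (n : ℕ) :
    newtonPartialSum f z₀ z n = newtonPartialSum g z₀ z n := by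
  simp only [newtonPartialSum, fwdDiff1, h]

lemma HasNewtonSeries.add (hf : HasNewtonSeries f z₀ z) (hg : HasNewtonSeries g z₀ z) :
    HasNewtonSeries (f + g) z₀ z := by
  rw [HasNewtonSeries, funext newtonPartialSum_add]
  exact Tendsto.add hf hg

lemma HasNewtonSeries.smul (c : ℂ) (hf : HasNewtonSeries f z₀ z) :
    HasNewtonSeries (c • f) z₀ z := by
  rw [HasNewtonSeries, funext (newtonPartialSum_smul c)]
  exact hf.const_mul c

lemma HasNewtonSeries.congr (hf : HasNewtonSeries f z₀ z)
    (h : ∀ i : ℕ, f (z₀ + i) = g (z₀ + i)) (hz : f z = g z) : HasNewtonSeries g z₀ z := by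
  rwa [HasNewtonSeries, ← hz, ← funext (newtonPartialSum_congr (z := z) h)]

lemma hasDerivAt_newtonPartialSum {F : ℂ → ℂ → ℂ} {F' : ℂ → ℂ} {σ : ℂ} (n : ℕ)
    (hF : ∀ i : ℕ, HasDerivAt (fun s => F s (z₀ + i)) (F' (z₀ + i)) σ) :
    HasDerivAt (fun s => newtonPartialSum (F s) z₀ z n) (newtonPartialSum F' z₀ z n) σ :=
  HasDerivAt.fun_sum fun _ _ => (HasDerivAt.fun_sum fun i _ => (hF i).const_mul _).const_mul _

end NewtonSeries

lemma genBinom_eq_descPochhammer_eval (w : ℂ) (k : ℕ) :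
    genBinom w k = (descPochhammer ℂ k).eval w / k ! := by
  rw [genBinom, descPochhammer_eval_eq_prod_range]

lemma genBinom_natCast (m k : ℕ) : genBinom m k = m.choose k := by
  rw [genBinom_eq_descPochhammer_eval, descPochhammer_eval_eq_descFactorial,
    Nat.descFactorial_eq_factorial_mul_choose]
  push_cast
  exact mul_div_cancel_left₀ _ (Nat.cast_ne_zero.2 (Nat.factorial_ne_zero k))

lemma newtonPartialSum_add_natCast (f : ℂ → ℂ) (z₀ : ℂ) {m n : ℕ} (hmn : m < n) :
    newtonPartialSum f z₀ (z₀ + m) n = f (z₀ + m) := by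
  have hGN := shift_eq_sum_fwdDiff_iter 1 f m z₀
  simp only [nsmul_eq_mul, mul_one] at hGN
  rw [hGN, newtonPartialSum, eventually_constant_sum _ hmn]
  · simp only [add_sub_cancel_left, genBinom_natCast, fwdDiff1_eq_iterate]
  · intro k hk
    rw [add_sub_cancel_left, genBinom_natCast, Nat.choose_eq_zero_of_lt (by omega), Nat.cast_zero,
      zero_mul]

lemma newtonPartialSum_eval_of_natDegree_lt (p : ℂ[X]) (z₀ z : ℂ) {n : ℕ} (hn : p.natDegree < n) :
    newtonPartialSum p.eval z₀ z n = newtonPartialSum p.eval z₀ z (p.natDegree + 1) := by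
  refine eventually_constant_sum (fun k hk => ?_) hn
  rw [fwdDiff1_eq_iterate, fwdDiff_iter_eq_zero_of_degree_lt (by omega), Pi.zero_apply, mul_zero]

lemma newtonPartialSum_eval (p : ℂ[X]) (z₀ z : ℂ) :
    newtonPartialSum p.eval z₀ z (p.natDegree + 1) = p.eval z := by
  set q : ℂ[X] := ∑ k ∈ range (p.natDegree + 1),
    C (fwdDiff1 p.eval z₀ k / k !) * (descPochhammer ℂ k).comp (X - C z₀)
  have hq (w : ℂ) : q.eval w = newtonPartialSum p.eval z₀ w (p.natDegree + 1) := by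
    simp only [q, eval_finsetSum, eval_mul, eval_C, eval_comp, eval_sub, eval_X, newtonPartialSum,
      genBinom_eq_descPochhammer_eval]
    exact sum_congr rfl fun k _ => by ring
  suffices q = p by rw [← hq, this]
  refine eq_of_infinite_eval_eq q p <| Set.infinite_of_injective_forall_mem
    ((add_right_injective z₀).comp Nat.cast_injective) fun m => ?_
  change q.eval (z₀ + m) = p.eval (z₀ + m)
  rw [hq, ← newtonPartialSum_eval_of_natDegree_lt p z₀ _ (lt_max_of_lt_left (lt_add_one _)),
    newtonPartialSum_add_natCast _ _ (lt_max_of_lt_right (lt_add_one m))]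

lemma hasNewtonSeries_eval (p : ℂ[X]) (z₀ z : ℂ) : HasNewtonSeries p.eval z₀ z :=
  tendsto_atTop_of_eventually_const fun _ hn =>
    (newtonPartialSum_eval_of_natDegree_lt p z₀ z hn).trans (newtonPartialSum_eval p z₀ z)

lemma sub_add_natCast_ne_zero {σ w : ℂ} (h : σ.re < w.re) (j : ℕ) : w - σ + j ≠ 0 := by
  refine fun h0 => (congrArg Complex.re h0).not_gt ?_
  simp only [Complex.add_re, Complex.sub_re, Complex.natCast_re, Complex.zero_re]
  linarith [j.cast_nonneg (α := ℝ)]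

lemma fwdDiff_iterate_inv_sub {σ w : ℂ} (hw : σ.re < w.re) (k : ℕ) :
    (fwdDiff 1)^[k] (fun w => (w - σ)⁻¹) w = (-1) ^ k * k ! / ∏ j ∈ range (k + 1), (w - σ + j) := by
  induction k generalizing w with
  | zero => simp
  | succ k ih =>
    have hw' : σ.re < (w + 1).re := by simp only [Complex.add_re, Complex.one_re]; linarith
    rw [Function.iterate_succ_apply', fwdDiff, ih hw, ih hw']
    set x := w - σ
    have hx := sub_add_natCast_ne_zero hw
    set A := ∏ j ∈ range (k + 1), (w + 1 - σ + j)
    set B := ∏ j ∈ range (k + 1), (x + j)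
    have hA : A * x = ∏ j ∈ range (k + 1 + 1), (x + j) := by
      rw [prod_range_succ' _ (k + 1), Nat.cast_zero, add_zero]
      congr 1
      exact prod_congr rfl fun j _ => by push_cast; ring
    have hB : ∏ j ∈ range (k + 1 + 1), (x + j) = B * (x + (k + 1)) := by
      rw [prod_range_succ]
      push_cast
      ring
    have hA0 : A ≠ 0 := prod_ne_zero_iff.2 fun j _ => by
      simpa [add_assoc, add_comm (1 : ℂ), add_sub_right_comm] using hx (j + 1)
    have hB0 : B ≠ 0 := prod_ne_zero_iff.2 fun j _ => hx j
    have hk : x + (k + 1) ≠ 0 := by exact_mod_cast hx (k + 1)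
    have hx0 : x ≠ 0 := by simpa using hx 0
    rw [hB, Nat.factorial_succ]
    push_cast
    field_simp
    linear_combination -(-1) ^ k * (k ! : ℂ) * (hA.trans hB)

lemma inv_sub_sub_newtonPartialSum {σ z₀ z : ℂ} (hσ : σ.re < z₀.re) (hz : z ≠ σ) (n : ℕ) :
    (z - σ)⁻¹ - newtonPartialSum (fun w => (w - σ)⁻¹) z₀ z n =
      (∏ i ∈ range n, (z₀ - z + i)) / ((z - σ) * ∏ i ∈ range n, (z₀ - σ + i)) := by
  induction n with
  | zero => simp [newtonPartialSum]
  | succ n ih =>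
    rw [newtonPartialSum, sum_range_succ, ← newtonPartialSum, sub_add_eq_sub_sub, ih,
      fwdDiff1_eq_iterate, fwdDiff_iterate_inv_sub hσ, genBinom]
    have hsign : (∏ i ∈ range n, (z - z₀ - i)) * (-1) ^ n = ∏ i ∈ range n, (z₀ - z + i) := by
      rw [show ((-1 : ℂ)) ^ n = ∏ _i ∈ range n, (-1 : ℂ) by simp, ← prod_mul_distrib]
      exact prod_congr rfl fun i _ => by ring
    have hB : ∏ i ∈ range n, (z₀ - σ + i) ≠ 0 :=
      prod_ne_zero_iff.2 fun i _ => sub_add_natCast_ne_zero hσ i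
    have hn := sub_add_natCast_ne_zero hσ n
    simp only [prod_range_succ, ← hsign]
    have := sub_ne_zero.2 hz
    have := Nat.cast_ne_zero (R := ℂ).2 (Nat.factorial_ne_zero n)
    field_simp
    ring

/-- Euler's limit formula `Γ(b) = lim n ^ b n! / ∏_{j ≤ n} (b + j)`, away from the poles of `Γ`
(where the product eventually vanishes). -/
lemma tendsto_norm_prod_add_natCast_div_factorial {b : ℂ} (hb : b.re < 0) :
    Tendsto (fun n : ℕ => ‖∏ j ∈ range (n + 1), (b + j)‖ / n !) atTop (𝓝 0) := by
  by_cases hpole : ∃ m : ℕ, b = -m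
  · obtain ⟨m, rfl⟩ := hpole
    refine tendsto_atTop_of_eventually_const (i₀ := m) fun n hn => ?_
    rw [prod_eq_zero (mem_range.2 (Nat.lt_succ_of_le hn)) (neg_add_cancel _), norm_zero, zero_div]
  · simp only [not_exists] at hpole
    have hΓ := (Complex.GammaSeq_tendsto_Gamma b).norm.inv₀
      (norm_ne_zero_iff.2 (Complex.Gamma_ne_zero hpole))
    have hpow := (tendsto_rpow_neg_atTop (neg_pos.2 hb)).comp tendsto_natCast_atTop_atTop
    rw [neg_neg] at hpow
    refine (zero_mul ‖Complex.Gamma b‖⁻¹ ▸ hpow.mul hΓ).congr' ?_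
    filter_upwards [eventually_gt_atTop 0] with n hn
    have : (0 : ℝ) < n ^ b.re := by positivity
    simp only [Function.comp_apply, Complex.GammaSeq, norm_div, norm_mul,
      Complex.norm_natCast_cpow_of_pos hn, Complex.norm_natCast]
    field_simp

lemma mul_factorial_le_prod_norm_add_natCast {a : ℂ} {δ : ℝ} (hδ : 0 ≤ δ) (ha : δ ≤ a.re)
    (n : ℕ) : δ * n ! ≤ ∏ i ∈ range (n + 1), ‖a + i‖ := by
  have hfac : (n ! : ℝ) ≤ ∏ i ∈ range n, ‖a + (i + 1 : ℕ)‖ := by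
    rw [← prod_range_add_one_eq_factorial, Nat.cast_prod]
    refine prod_le_prod (fun i _ => by positivity) fun i _ => ?_
    calc ((i + 1 : ℕ) : ℝ) ≤ (a + (i + 1 : ℕ)).re := by simp; linarith
      _ ≤ ‖a + (i + 1 : ℕ)‖ := Complex.re_le_norm _
  rw [prod_range_succ', Nat.cast_zero, add_zero, mul_comm]
  calc (n ! : ℝ) * δ ≤ (∏ i ∈ range n, ‖a + (i + 1 : ℕ)‖) * ‖a‖ :=
        mul_le_mul hfac (ha.trans (Complex.re_le_norm a)) hδ (by positivity)

lemma norm_inv_sub_sub_newtonPartialSum_le {σ z₀ z : ℂ} {δ : ℝ} (hδ : 0 < δ)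
    (hσ : σ.re + δ ≤ z₀.re) (hz : z₀.re < z.re) (n : ℕ) :
    ‖(z - σ)⁻¹ - newtonPartialSum (fun w => (w - σ)⁻¹) z₀ z (n + 1)‖ ≤
      (δ ^ 2)⁻¹ * (‖∏ j ∈ range (n + 1), (z₀ - z + j)‖ / n !) := by
  have hzσ : δ ≤ ‖z - σ‖ :=
    le_trans (by simp only [Complex.sub_re]; linarith) (Complex.re_le_norm (z - σ))
  have hprod := mul_factorial_le_prod_norm_add_natCast hδ.le
    (a := z₀ - σ) (by simp only [Complex.sub_re]; linarith) n
  rw [inv_sub_sub_newtonPartialSum (by linarith) (fun h => by subst h; linarith), norm_div,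
    norm_mul, norm_prod (range (n + 1)) fun i => z₀ - σ + i]
  calc _ ≤ ‖∏ j ∈ range (n + 1), (z₀ - z + j)‖ / (δ * (δ * n !)) :=
        div_le_div_of_nonneg_left (norm_nonneg _) (by positivity)
          (mul_le_mul hzσ hprod (by positivity) (norm_nonneg _))
    _ = _ := by ring

lemma tendstoLocallyUniformlyOn_inv_sub_sub_newtonPartialSum {z₀ z : ℂ} (hz : z₀.re < z.re) :
    TendstoLocallyUniformlyOn
      (fun n σ => (z - σ)⁻¹ - newtonPartialSum (fun w => (w - σ)⁻¹) z₀ z n) 0 atTop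
      {σ | σ.re < z₀.re} := by
  have hU : {σ : ℂ | σ.re < z₀.re} = ⋃ δ ∈ Set.Ioi (0 : ℝ), {σ : ℂ | σ.re + δ < z₀.re} := by
    ext σ
    simp only [Set.mem_ofPred_eq, Set.mem_iUnion, Set.mem_Ioi, exists_prop]
    exact ⟨fun h => ⟨(z₀.re - σ.re) / 2, by linarith, by linarith⟩,
      fun ⟨δ, hδ, h⟩ => by linarith⟩
  rw [hU]
  refine tendstoLocallyUniformlyOn_biUnion
    (fun δ _ => isOpen_lt (by fun_prop) continuous_const) fun δ hδ => ?_
  refine TendstoUniformlyOn.tendstoLocallyUniformlyOn (Metric.tendstoUniformlyOn_iff.2 ?_)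
  intro ε hε
  have hv := (tendsto_norm_prod_add_natCast_div_factorial (b := z₀ - z)
    (by simp only [Complex.sub_re]; linarith)).const_mul (δ ^ 2)⁻¹
  obtain ⟨N, hN⟩ := eventually_atTop.1 (hv.eventually (gt_mem_nhds (by simpa using hε)))
  refine eventually_atTop.2 ⟨N + 1, fun n hn σ hσ => ?_⟩
  obtain ⟨m, rfl⟩ : ∃ m, n = m + 1 := ⟨n - 1, by omega⟩
  rw [Pi.zero_apply, dist_comm, dist_zero_right]
  exact (norm_inv_sub_sub_newtonPartialSum_le hδ (le_of_lt hσ) hz m).trans_lt (hN m (by omega))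

/-- The `m`-th derivative of `σ ↦ (w - σ)⁻¹`. -/
def invSubPow (m : ℕ) (σ w : ℂ) : ℂ := m ! * ((w - σ) ^ (m + 1))⁻¹

lemma hasDerivAt_invSubPow (m : ℕ) {σ w : ℂ} (h : w ≠ σ) :
    HasDerivAt (fun s => invSubPow m s w) (invSubPow (m + 1) σ w) σ := by
  have h0 : w - σ ≠ 0 := sub_ne_zero.2 h
  have := ((((hasDerivAt_id σ).const_sub w).pow (m + 1)).inv (pow_ne_zero _ h0)).const_mul
    (m ! : ℂ)
  refine this.congr_deriv ?_
  simp only [invSubPow, Nat.factorial_succ, id, Pi.pow_apply]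
  push_cast
  field_simp
  ring

def poleRemainder (z₀ z : ℂ) (m n : ℕ) (σ : ℂ) : ℂ :=
  invSubPow m σ z - newtonPartialSum (invSubPow m σ) z₀ z n

lemma hasDerivAt_poleRemainder {z₀ z σ : ℂ} (hσ : σ.re < z₀.re) (hz : z₀.re < z.re) (m n : ℕ) :
    HasDerivAt (poleRemainder z₀ z m n) (poleRemainder z₀ z (m + 1) n σ) σ := by
  refine (hasDerivAt_invSubPow m fun h => ?_).sub
    (hasDerivAt_newtonPartialSum n fun i => hasDerivAt_invSubPow m fun h => ?_)
  · subst h; linarith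
  · exact sub_add_natCast_ne_zero hσ i (by rw [← h]; ring)

lemma tendstoLocallyUniformlyOn_poleRemainder {z₀ z : ℂ} (hz : z₀.re < z.re) (m : ℕ) :
    TendstoLocallyUniformlyOn (poleRemainder z₀ z m) 0 atTop {σ | σ.re < z₀.re} := by
  induction m with
  | zero =>
    refine (tendstoLocallyUniformlyOn_inv_sub_sub_newtonPartialSum hz).congr fun n σ _ => ?_
    have : invSubPow 0 σ = fun w => (w - σ)⁻¹ := funext fun w => by simp [invSubPow]
    simp [poleRemainder, this]
  | succ m ih =>
    have hU : IsOpen {σ : ℂ | σ.re < z₀.re} := isOpen_lt (by fun_prop) continuous_const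
    have hderiv := ih.deriv (Eventually.of_forall fun n σ hσ =>
      (hasDerivAt_poleRemainder hσ hz m n).differentiableAt.differentiableWithinAt) hU
    rw [Pi.zero_def, deriv_const'] at hderiv
    exact hderiv.congr fun n σ hσ => (hasDerivAt_poleRemainder hσ hz m n).deriv

lemma hasNewtonSeries_invSubPow {z₀ z σ : ℂ} (hσ : σ.re < z₀.re) (hz : z₀.re < z.re) (m : ℕ) :
    HasNewtonSeries (invSubPow m σ) z₀ z := by
  have h := (tendstoLocallyUniformlyOn_poleRemainder hz m).tendsto_at hσ
  rw [HasNewtonSeries]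
  simpa [poleRemainder] using (tendsto_const_nhds (x := invSubPow m σ z)).sub h

lemma exists_eval_div_eq_invSubPow_add (P : ℂ[X]) {Q : ℂ[X]} {σ : ℂ} (hQ : Q ≠ 0)
    (hσ : Q.IsRoot σ) : ∃ (c : ℂ) (m : ℕ) (P₁ Q₁ : ℂ[X]), Q = (X - C σ) * Q₁ ∧
      ∀ w, Q.eval w ≠ 0 → P.eval w / Q.eval w = c * invSubPow m σ w + P₁.eval w / Q₁.eval w := by
  obtain ⟨m, hm⟩ : ∃ m, Q.rootMultiplicity σ = m + 1 :=
    Nat.exists_eq_add_one.2 ((rootMultiplicity_pos hQ).2 hσ)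
  set Q₂ := Q /ₘ (X - C σ) ^ Q.rootMultiplicity σ
  have hQ₂σ : Q₂.eval σ ≠ 0 := eval_divByMonic_pow_rootMultiplicity_ne_zero σ hQ
  have hfact : (X - C σ) ^ (m + 1) * Q₂ = Q := hm ▸ pow_mul_divByMonic_rootMultiplicity_eq Q σ
  set c := P.eval σ / Q₂.eval σ
  obtain ⟨P₁, hP₁⟩ : X - C σ ∣ P - C c * Q₂ := dvd_iff_isRoot.2 (by simp [c, hQ₂σ])
  refine ⟨c / m !, m, P₁, (X - C σ) ^ m * Q₂, by rw [← hfact, pow_succ']; ring, fun w hw => ?_⟩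
  rw [← hfact] at hw
  have hPw : P.eval w = c * Q₂.eval w + (w - σ) * P₁.eval w := by
    simpa [sub_eq_iff_eq_add'] using congrArg (eval w) hP₁
  simp only [eval_mul, eval_pow, eval_sub, eval_X, eval_C, mul_ne_zero_iff] at hw
  obtain ⟨hwσ, hQ₂w⟩ : w - σ ≠ 0 ∧ Q₂.eval w ≠ 0 := ⟨fun h => hw.1 (by simp [h]), hw.2⟩
  rw [← hfact, hPw]
  simp only [invSubPow, eval_mul, eval_pow, eval_sub, eval_X, eval_C]
  have := Nat.cast_ne_zero (R := ℂ).2 (Nat.factorial_ne_zero m)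
  field_simp
  ring

theorem hasNewtonSeries_eval_div {z₀ z : ℂ} (hz : z₀.re < z.re) (P Q : ℂ[X])
    (hroots : ∀ σ, Q.eval σ = 0 → σ.re < z₀.re) :
    HasNewtonSeries (fun w => P.eval w / Q.eval w) z₀ z := by
  induction hd : Q.natDegree using Nat.strong_induction_on generalizing P Q with | _ d ih
  rcases Nat.eq_zero_or_pos d with rfl | hpos
  · obtain ⟨q, rfl⟩ := natDegree_eq_zero.1 hd
    refine (hasNewtonSeries_eval (C q⁻¹ * P) z₀ z).congr (fun i => ?_) ?_ <;>
      simp [div_eq_inv_mul]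
  have hQ : Q ≠ 0 := by rintro rfl; simp at hd; omega
  obtain ⟨σ, hσ⟩ := Complex.exists_root (natDegree_pos_iff_degree_pos.1 (hd ▸ hpos))
  obtain ⟨c, m, P₁, Q₁, rfl, hdecomp⟩ := exists_eval_div_eq_invSubPow_add P hQ hσ
  have hQ₁ : Q₁ ≠ 0 := right_ne_zero_of_mul hQ
  have hpole := (hasNewtonSeries_invSubPow (hroots σ hσ) hz m).smul c
  have hdeg : Q₁.natDegree < d := by
    rw [← hd, natDegree_mul (X_sub_C_ne_zero σ) hQ₁, natDegree_X_sub_C]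
    omega
  have hrest := ih _ hdeg P₁ Q₁ (fun τ hτ => hroots τ (by simp [hτ])) rfl
  have hQne : ∀ w : ℂ, z₀.re ≤ w.re → ((X - C σ) * Q₁).eval w ≠ 0 :=
    fun w hw h => (hroots w h).not_ge hw
  refine (hpole.add hrest).congr (fun i => (hdecomp _ (hQne _ ?_)).symm)
    (hdecomp _ (hQne _ hz.le)).symm
  simp

theorem newton_series_of_rational_function_general
    (P Q : Polynomial ℝ) (z₀ : ℂ)
    (hroots : ∀ σ : ℂ, (Polynomial.aeval σ) Q = 0 → σ.re < z₀.re)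
    (R : ℂ → ℂ) (hR : ∀ w : ℂ, R w = (Polynomial.aeval w) P / (Polynomial.aeval w) Q)
    (z : ℂ) (hz : z₀.re < z.re) :
    Tendsto (fun n : ℕ =>
        ∑ k ∈ Finset.range n, genBinom (z - z₀) k * fwdDiff1 R z₀ k)
      atTop (nhds (R z)) := by
  have haeval (p : ℝ[X]) (w : ℂ) : aeval w p = (p.map (algebraMap ℝ ℂ)).eval w := by
    rw [aeval_def, eval_map]
  obtain rfl : R = fun w => (P.map (algebraMap ℝ ℂ)).eval w / (Q.map (algebraMap ℝ ℂ)).eval w :=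
    funext fun w => by rw [hR, haeval, haeval]
  exact hasNewtonSeries_eval_div hz _ _ fun σ hσ => hroots σ (by rwa [haeval])

theorem newton_series_of_rational_function
    (P Q : Polynomial ℝ) (hQ : Q ≠ 0) (z₀ : ℂ) (hz₀ : 0 < z₀.re)
    (hroots : ∀ σ : ℂ, (Polynomial.aeval σ) Q = 0 → σ.re < z₀.re)
    (R : ℂ → ℂ) (hR : ∀ w : ℂ, R w = (Polynomial.aeval w) P / (Polynomial.aeval w) Q)
    (z : ℂ) (hz : z₀.re < z.re) :
    Tendsto (fun n : ℕ =>
        ∑ k ∈ Finset.range n, genBinom (z - z₀) k * fwdDiff1 R z₀ k)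
      atTop (nhds (R z)) :=
  newton_series_of_rational_function_general P Q z₀ hroots R hR z hz
end
end

section
/- Let h > 0 be real. Let m : ℝ → ℂ be Lebesgue measurable and Lebesgue integrable, let j ∈ ℕ, let a₀,…,a_j ∈ ℂ, N₀,…,N_j ∈ ℕ, and c₀,…,c_j ∈ ℝ with c_k ∉ {1/(2h) + ν/h : ν ∈ ℤ} for every k. Suppose f : ℝ → ℂ satisfies f(w) = ∫_ℝ m(x) e^{-2πi w x} dx + ∑_{k=0}^{j} a_k e^{-2πi c_k w} (2πi w)^{N_k} for every w ∈ ℝ. Then for every y ∈ ℝ, lim_{n→∞} δ_h^n[f](y) / 2^n = 0, i.e. δ_h^n[f](y) = o(2^n). -/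
/-
Write `f = F + ∑ₖ Aₖ`, with `F` the Fourier transform of `m` and
`Aₖ(w) = aₖ e^{-2πicₖw} (2πiw)^{Nₖ}`.
The central difference of the character `w ↦ e^{-2πixw}` is that character times
`(e^{-πixh} - e^{πixh})ⁿ = (-2i sin(πxh))ⁿ`, so `δₕⁿ[F](y) / 2ⁿ` is the integral of `m` against
`(-i sin(πxh))ⁿ`, which tends to `0` by dominated convergence because `|sin(πxh)| < 1` off a
countable set. Conjugated by `e^{-2πicw}`, `δₕ` becomes the operator
`P ↦ u P(X + h/2) - v P(X - h/2)` on polynomials, with `u = e^{-πich}`, `v = e^{πich}`; it is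
multiplication by `u - v` up to a term of lower degree, and `|u - v| = 2 |sin(πch)| < 2` exactly
when `c ∉ 1/(2h) + ℤ/h`. Induction on the degree then gives `δₕⁿ[Aₖ](y) = o(2ⁿ)`.
-/

open MeasureTheory Filter Finset Topology Polynomial Real Complex

noncomputable section

section TwistedDiff

variable {R : Type*} [CommRing R]

def twistedDiff (u v r : R) : Module.End R R[X] := u • taylor r - v • taylor (-r)

theorem smul_taylor_pow_eval (u r : R) (q : ℕ) (P : R[X]) (t : R) :
    (((u • taylor r : Module.End R R[X]) ^ q) P).eval t = u ^ q * P.eval (t + q * r) := by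
  induction q generalizing P t with
  | zero => simp
  | succ q ih =>
    rw [pow_succ, Module.End.mul_apply, ih, LinearMap.smul_apply, eval_smul, taylor_eval,
      smul_eq_mul, Nat.cast_succ, add_one_mul, add_assoc, pow_succ, mul_assoc]

theorem commute_smul_taylor (u v r s : R) :
    Commute (u • taylor r : Module.End R R[X]) (v • taylor s) :=
  LinearMap.ext fun P => by
    simp only [Module.End.mul_apply, LinearMap.smul_apply, map_smul, taylor_taylor, smul_smul,
      mul_comm u, add_comm r]

theorem twistedDiff_pow_eval (u v r : R) (n : ℕ) (P : R[X]) (t : R) :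
    ((twistedDiff u v r ^ n) P).eval t = ∑ k ∈ range (n + 1),
      (n.choose k : R) * (-1) ^ k * u ^ (n - k) * v ^ k * P.eval (t + (n - 2 * k) * r) := by
  have hsplit : twistedDiff u v r = (-v) • taylor (-r) + u • taylor r := by
    refine LinearMap.ext fun P => ?_
    simp only [twistedDiff, LinearMap.sub_apply, LinearMap.add_apply, LinearMap.smul_apply,
      neg_smul]
    abel
  rw [hsplit, (commute_smul_taylor _ _ _ _).add_pow, LinearMap.sum_apply, eval_finsetSum]
  refine sum_congr rfl fun k hk => ?_
  rw [Module.End.mul_apply, Module.End.mul_apply, Module.End.natCast_apply, smul_taylor_pow_eval,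
    smul_taylor_pow_eval, eval_smul, nsmul_eq_mul, Nat.cast_sub (mem_range_succ_iff.1 hk), neg_pow,
    show t + k * -r + (n - k) * r = t + (n - 2 * k) * r by ring]
  ring

theorem degree_taylor_sub_lt (r : R) {P : R[X]} (hP : P ≠ 0) :
    (taylor r P - P).degree < P.degree :=
  (degree_sub_lt_left (degree_taylor P r) ((taylor_eq_zero r P).not.2 hP)
    (leadingCoeff_taylor r P)).trans_eq (degree_taylor P r)

theorem degree_twistedDiff_sub_smul_lt (u v r : R) {P : R[X]} (hP : P ≠ 0) :
    (twistedDiff u v r P - (u - v) • P).degree < P.degree := by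
  have hEq : twistedDiff u v r P - (u - v) • P =
      u • (taylor r P - P) - v • (taylor (-r) P - P) := by
    simp only [twistedDiff, LinearMap.sub_apply, LinearMap.smul_apply, smul_sub, sub_smul]
    abel
  rw [hEq]
  exact (degree_sub_le _ _).trans_lt <| max_lt
    ((degree_smul_le _ _).trans_lt (degree_taylor_sub_lt r hP))
    ((degree_smul_le _ _).trans_lt (degree_taylor_sub_lt (-r) hP))

theorem twistedDiff_pow_one (u v r : R) (n : ℕ) :
    (twistedDiff u v r ^ n) 1 = C ((u - v) ^ n) := by
  induction n with
  | zero => simp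
  | succ n ih =>
    rw [pow_succ', Module.End.mul_apply, ih, pow_succ', C_mul, twistedDiff]
    simp [taylor_C, smul_eq_C_mul, sub_mul]

end TwistedDiff

theorem tendsto_zero_of_le_mul_add {u e : ℕ → ℝ} {r : ℝ} (hr₀ : 0 ≤ r) (hr : r < 1)
    (hu₀ : ∀ n, 0 ≤ u n) (hu : ∀ n, u (n + 1) ≤ r * u n + e n)
    (he : Tendsto e atTop (𝓝 0)) : Tendsto u atTop (𝓝 0) := by
  refine tendsto_order.2 ⟨fun a ha => .of_forall fun n => ha.trans_le (hu₀ n), fun ε hε => ?_⟩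
  obtain ⟨M, hM⟩ := eventually_atTop.1 <|
    he.eventually (gt_mem_nhds (by positivity : 0 < (1 - r) * (ε / 2)))
  -- from time `M` on, `u - ε / 2` contracts by the factor `r`
  have hcontr : ∀ i, u (i + M) - ε / 2 ≤ r ^ i * (u M - ε / 2) := by
    intro i
    induction i with
    | zero => simp
    | succ i ih =>
      calc u (i + 1 + M) - ε / 2 ≤ r * (u (i + M) - ε / 2) := by
            rw [add_right_comm]
            linarith [hu (i + M), hM (i + M) (by omega)]
        _ ≤ r ^ (i + 1) * (u M - ε / 2) := by
            rw [pow_succ', mul_assoc]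
            exact mul_le_mul_of_nonneg_left ih hr₀
  have hgeom : Tendsto (fun i => r ^ i * (u M - ε / 2)) atTop (𝓝 0) := by
    simpa using (tendsto_pow_atTop_nhds_zero_of_lt_one hr₀ hr).mul_const (u M - ε / 2)
  obtain ⟨I, hI⟩ := eventually_atTop.1 (hgeom.eventually (gt_mem_nhds (half_pos hε)))
  refine eventually_atTop.2 ⟨I + M, fun n hn => ?_⟩
  have := hcontr (n - M)
  rw [Nat.sub_add_cancel (by omega)] at this
  linarith [hI (n - M) (by omega)]

theorem tendsto_twistedDiff_pow_eval_div_two_pow {u v : ℂ} (huv : ‖u - v‖ < 2) (r : ℂ)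
    (P : ℂ[X]) (t : ℂ) :
    Tendsto (fun n => ((twistedDiff u v r ^ n) P).eval t / 2 ^ n) atTop (𝓝 0) := by
  induction hd : P.natDegree using Nat.strong_induction_on generalizing P with
  | _ d ih =>
  by_cases hP : P = 0
  · simp [hP]
  set Q := twistedDiff u v r P - (u - v) • P
  have hQlim : Tendsto (fun n => ((twistedDiff u v r ^ n) Q).eval t / 2 ^ n) atTop (𝓝 0) := by
    by_cases hQ0 : Q = 0
    · simp [hQ0]
    exact ih _ (hd ▸ natDegree_lt_natDegree hQ0 (degree_twistedDiff_sub_smul_lt u v r hP)) Q rfl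
  have hstep (n : ℕ) : ((twistedDiff u v r ^ (n + 1)) P).eval t / 2 ^ (n + 1) =
      (u - v) / 2 * (((twistedDiff u v r ^ n) P).eval t / 2 ^ n) +
        ((twistedDiff u v r ^ n) Q).eval t / 2 ^ n / 2 := by
    rw [pow_succ, Module.End.mul_apply,
      (add_sub_cancel ((u - v) • P) (twistedDiff u v r P)).symm, map_add, map_smul, eval_add,
      eval_smul, smul_eq_mul]
    ring
  refine tendsto_zero_iff_norm_tendsto_zero.2 <|
    tendsto_zero_of_le_mul_add (r := ‖u - v‖ / 2) (by positivity) (by linarith)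
      (fun n => norm_nonneg _) (fun n => ?_) (by simpa using hQlim.norm.div_const 2)
  rw [hstep]
  refine (norm_add_le _ _).trans_eq ?_
  simp

def centralDiff (h : ℝ) (n : ℕ) (g : ℝ → ℂ) (y : ℝ) : ℂ :=
  ∑ k ∈ range (n + 1), (n.choose k : ℂ) * (-1) ^ k * g (y + ((n : ℝ) / 2 - (k : ℝ)) * h)

section CentralDiff

variable (h : ℝ) (n : ℕ) (y : ℝ)

theorem centralDiff_add (g₁ g₂ : ℝ → ℂ) :
    centralDiff h n (fun w => g₁ w + g₂ w) y = centralDiff h n g₁ y + centralDiff h n g₂ y := by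
  simp only [centralDiff, mul_add, sum_add_distrib]

theorem centralDiff_finset_sum {ι : Type*} (s : Finset ι) (g : ι → ℝ → ℂ) :
    centralDiff h n (fun w => ∑ i ∈ s, g i w) y = ∑ i ∈ s, centralDiff h n (g i) y := by
  simp only [centralDiff, mul_sum]
  exact sum_comm

theorem centralDiff_const_mul (a : ℂ) (g : ℝ → ℂ) :
    centralDiff h n (fun w => a * g w) y = a * centralDiff h n g y := by
  simp only [centralDiff, mul_sum]
  exact sum_congr rfl fun k _ => by ring

theorem centralDiff_integral {α : Type*} [MeasurableSpace α] {μ : Measure α} (g : α → ℝ → ℂ)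
    (hg : ∀ w, Integrable (g · w) μ) :
    centralDiff h n (fun w => ∫ x, g x w ∂μ) y = ∫ x, centralDiff h n (g x) y ∂μ := by
  simp only [centralDiff, ← integral_const_mul]
  exact (integral_finsetSum _ fun k _ => (hg _).const_mul _).symm

theorem centralDiff_exp_mul_eval (c : ℝ) (P : ℂ[X]) :
    centralDiff h n (fun w => cexp (-2 * π * I * c * w) * P.eval (w : ℂ)) y =
      cexp (-2 * π * I * c * y) * ((twistedDiff (cexp (-((π * c * h : ℝ) : ℂ) * I))
        (cexp ((π * c * h : ℝ) * I)) (h / 2) ^ n) P).eval (y : ℂ) := by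
  rw [twistedDiff_pow_eval, mul_sum]
  refine sum_congr rfl fun k hk => ?_
  beta_reduce
  have hexp : cexp (-2 * π * I * c * ((y + ((n : ℝ) / 2 - k) * h : ℝ) : ℂ)) =
      cexp (-2 * π * I * c * y) * cexp (-((π * c * h : ℝ) : ℂ) * I) ^ (n - k) *
        cexp ((π * c * h : ℝ) * I) ^ k := by
    rw [← Complex.exp_nat_mul, ← Complex.exp_nat_mul, ← Complex.exp_add, ← Complex.exp_add,
      Nat.cast_sub (mem_range_succ_iff.1 hk)]
    push_cast
    congr 1
    ring
  rw [hexp, show (((y + ((n : ℝ) / 2 - k) * h : ℝ)) : ℂ) = y + (n - 2 * k) * (h / 2 : ℂ) by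
    push_cast; ring]
  ring

theorem centralDiff_exp (c : ℝ) :
    centralDiff h n (fun w => cexp (-2 * π * I * c * w)) y =
      cexp (-2 * π * I * c * y) *
        (cexp (-((π * c * h : ℝ) : ℂ) * I) - cexp ((π * c * h : ℝ) * I)) ^ n := by
  simpa [twistedDiff_pow_one] using centralDiff_exp_mul_eval h n y c 1

end CentralDiff

theorem norm_exp_neg_mul_I_sub_exp_mul_I (x : ℝ) :
    ‖cexp (-(x : ℂ) * I) - cexp (x * I)‖ = 2 * |Real.sin x| := by
  have h2sin := Complex.two_sin (x : ℂ)
  rw [show cexp (-(x : ℂ) * I) - cexp (x * I) = -(2 * Complex.sin x * I) by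
    linear_combination I * h2sin + (cexp (-x * I) - cexp (x * I)) * I_sq]
  rw [norm_neg, norm_mul, Complex.norm_I, mul_one, norm_mul, Complex.norm_two,
    ← Complex.ofReal_sin, Complex.norm_real, Real.norm_eq_abs]

theorem abs_sin_pi_mul_mul_lt_one {c h : ℝ} (hc : ¬∃ ν : ℤ, c = 1 / (2 * h) + ν / h) :
    |Real.sin (π * c * h)| < 1 := by
  refine (abs_sin_le_one _).lt_of_ne fun hone => hc ?_
  obtain ⟨ν, hν⟩ := Real.abs_sin_eq_one_iff.1 hone
  have hodd : (2 * ν + 1 : ℝ) ≠ 0 := by exact_mod_cast (by omega : 2 * ν + 1 ≠ 0)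
  have hch : 2 * c * h = 2 * ν + 1 := by
    apply mul_right_cancel₀ Real.pi_ne_zero; linarith
  have hh : h ≠ 0 := by rintro rfl; rw [mul_zero] at hch; exact hodd hch.symm
  exact ⟨ν, by field_simp; linarith⟩

theorem tendsto_integral_mul_pow {α : Type*} [MeasurableSpace α] {μ : Measure α} {g ρ : α → ℂ}
    (hg : Integrable g μ) (hρ : AEStronglyMeasurable ρ μ) (hρ_lt : ∀ᵐ x ∂μ, ‖ρ x‖ < 1) :
    Tendsto (fun n => ∫ x, g x * ρ x ^ n ∂μ) atTop (𝓝 0) := by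
  simpa only [integral_zero] using tendsto_integral_of_dominated_convergence
    (F := fun n x => g x * ρ x ^ n) (f := fun _ => 0) (fun x => ‖g x‖)
    (fun n => hg.1.mul (hρ.pow n)) hg.norm
    (fun n => hρ_lt.mono fun x hx => by
      simpa [norm_mul, norm_pow] using mul_le_of_le_one_right (norm_nonneg (g x))
        (pow_le_one₀ (norm_nonneg _) hx.le))
    (hρ_lt.mono fun x hx => by
      simpa using (tendsto_pow_atTop_nhds_zero_of_norm_lt_one hx).const_mul (g x))

theorem MeasureTheory.Integrable.mul_exp_neg_two_pi_I {m : ℝ → ℂ} (hm : Integrable m) (w : ℝ) :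
    Integrable (fun x : ℝ => m x * cexp (-2 * π * I * x * w)) :=
  hm.mul_bdd (by fun_prop) (c := 1) (.of_forall fun x => by
    rw [show -2 * π * I * x * w = ((-2 * π * x * w : ℝ) : ℂ) * I by push_cast; ring,
      Complex.norm_exp_ofReal_mul_I])

theorem tendsto_centralDiff_fourier_div_two_pow {m : ℝ → ℂ} (hm : Integrable m) (h y : ℝ) :
    Tendsto (fun n => centralDiff h n (fun w => ∫ x, m x * cexp (-2 * π * I * w * x)) y / 2 ^ n)
      atTop (𝓝 0) := by
  set ρ : ℝ → ℂ := fun x => (cexp (-((π * x * h : ℝ) : ℂ) * I) - cexp ((π * x * h : ℝ) * I)) / 2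
  have hswap : (fun w : ℝ => ∫ x, m x * cexp (-2 * π * I * w * x)) =
      fun w : ℝ => ∫ x, m x * cexp (-2 * π * I * x * w) :=
    funext fun w => congrArg _ (funext fun x => by rw [mul_right_comm _ (w : ℂ)])
  have hρ (n : ℕ) : centralDiff h n (fun w => ∫ x, m x * cexp (-2 * π * I * x * w)) y / 2 ^ n =
      ∫ x, m x * cexp (-2 * π * I * x * y) * ρ x ^ n := by
    rw [centralDiff_integral _ _ _ _ hm.mul_exp_neg_two_pi_I, ← integral_div]
    refine integral_congr_ae (.of_forall fun x => ?_)
    simp only [centralDiff_const_mul, centralDiff_exp, ρ, div_pow]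
    ring
  simp_rw [hswap, hρ]
  refine tendsto_integral_mul_pow (hm.mul_exp_neg_two_pi_I y) (by fun_prop) ?_
  filter_upwards [(Set.countable_range fun ν : ℤ => 1 / (2 * h) + ν / h).ae_notMem volume]
    with x hx
  have hsin := abs_sin_pi_mul_mul_lt_one fun ⟨ν, hν⟩ => hx ⟨ν, hν.symm⟩
  rw [norm_div, norm_exp_neg_mul_I_sub_exp_mul_I, Complex.norm_two]
  linarith

theorem tendsto_centralDiff_exp_mul_eval_div_two_pow {c h : ℝ}
    (hc : ¬∃ ν : ℤ, c = 1 / (2 * h) + ν / h) (P : ℂ[X]) (y : ℝ) :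
    Tendsto (fun n => centralDiff h n (fun w => cexp (-2 * π * I * c * w) * P.eval (w : ℂ)) y /
      2 ^ n) atTop (𝓝 0) := by
  have huv : ‖cexp (-((π * c * h : ℝ) : ℂ) * I) - cexp ((π * c * h : ℝ) * I)‖ < 2 := by
    rw [norm_exp_neg_mul_I_sub_exp_mul_I]
    linarith [abs_sin_pi_mul_mul_lt_one hc]
  simp_rw [centralDiff_exp_mul_eval, mul_div_assoc]
  simpa using (tendsto_twistedDiff_pow_eval_div_two_pow huv (h / 2) P y).const_mul
    (cexp (-2 * π * I * c * y))

theorem central_differences_little_o_two_pow_general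
    (h : ℝ)
    (m : ℝ → ℂ) (hmi : Integrable m)
    (j : ℕ) (a : ℕ → ℂ) (N : ℕ → ℕ) (c : ℕ → ℝ)
    (hc : ∀ k ≤ j, ¬ ∃ ν : ℤ, c k = 1 / (2 * h) + (ν : ℝ) / h)
    (f : ℝ → ℂ)
    (hf : ∀ w : ℝ,
      f w = (∫ x : ℝ, m x * Complex.exp (-2 * (Real.pi : ℂ) * Complex.I * (w : ℂ) * (x : ℂ)))
        + ∑ k ∈ Finset.range (j + 1),
            a k * Complex.exp (-2 * (Real.pi : ℂ) * Complex.I * (c k : ℂ) * (w : ℂ))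
              * (2 * (Real.pi : ℂ) * Complex.I * (w : ℂ)) ^ (N k))
    (y : ℝ) :
    Tendsto (fun n : ℕ =>
        (∑ k ∈ Finset.range (n + 1),
          (n.choose k : ℂ) * (-1) ^ k * f (y + ((n : ℝ) / 2 - (k : ℝ)) * h)) / 2 ^ n)
      atTop (nhds 0) := by
  have hf' : f = fun w : ℝ => (∫ x, m x * cexp (-2 * π * I * w * x)) + ∑ k ∈ range (j + 1),
      cexp (-2 * π * I * c k * w) * (C (a k) * (C (2 * π * I) * X) ^ N k).eval (w : ℂ) := by
    funext w
    rw [hf]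
    simp only [eval_mul, eval_C, eval_pow, eval_X]
    congr 1
    exact sum_congr rfl fun k _ => by ring
  change Tendsto (fun n => centralDiff h n f y / 2 ^ n) atTop (𝓝 0)
  simp_rw [hf', centralDiff_add, centralDiff_finset_sum, add_div, sum_div]
  rw [← add_zero (0 : ℂ)]
  refine (tendsto_centralDiff_fourier_div_two_pow hmi h y).add ?_
  simpa only [sum_const_zero] using tendsto_finsetSum (range (j + 1))
    fun k hk => tendsto_centralDiff_exp_mul_eval_div_two_pow (hc k (mem_range_succ_iff.1 hk)) _ y

theorem central_differences_little_o_two_pow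
    (h : ℝ) (hh : 0 < h)
    (m : ℝ → ℂ) (hm : Measurable m) (hmi : Integrable m)
    (j : ℕ) (a : ℕ → ℂ) (N : ℕ → ℕ) (c : ℕ → ℝ)
    (hc : ∀ k ≤ j, ¬ ∃ ν : ℤ, c k = 1 / (2 * h) + (ν : ℝ) / h)
    (f : ℝ → ℂ)
    (hf : ∀ w : ℝ,
      f w = (∫ x : ℝ, m x * Complex.exp (-2 * (Real.pi : ℂ) * Complex.I * (w : ℂ) * (x : ℂ)))
        + ∑ k ∈ Finset.range (j + 1),
            a k * Complex.exp (-2 * (Real.pi : ℂ) * Complex.I * (c k : ℂ) * (w : ℂ))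
              * (2 * (Real.pi : ℂ) * Complex.I * (w : ℂ)) ^ (N k))
    (y : ℝ) :
    Tendsto (fun n : ℕ =>
        (∑ k ∈ Finset.range (n + 1),
          (n.choose k : ℂ) * (-1) ^ k * f (y + ((n : ℝ) / 2 - (k : ℝ)) * h)) / 2 ^ n)
      atTop (nhds 0) :=
  central_differences_little_o_two_pow_general h m hmi j a N c hc f hf y
end
end

section
/- Let c ≥ 0 and h > 0 be real, let z ∈ ℂ, and let N ∈ ℕ. Then lim_{n→∞} ∑_{k=0}^{n} (n choose k) (−1)^{n−k} e^{-c(z + k h)} (z + k h)^N = 0; that is, the n-th forward difference with step h of the function w ↦ e^{-c w} w^N, evaluated at z, tends to 0 as n → ∞. -/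
/-!
The function `p k = (z + k h)^N` has vanishing `(N+1)`-st difference, so Newton's formula writes it
as `∑_{i ≤ N} Δⁱp(0) · C(k, i)`. With `x = e^{-ch}` the summand is `e^{-cz} xᵏ p k`, and since
`Δⁿ[xᵏ C(k, i)](0) = C(n, i) xⁱ (x - 1)^{n-i}`, the `n`-th difference is a combination of the
`N + 1` sequences `C(n, i) (x - 1)^{n-i}`, each of which tends to `0` because `|x - 1| < 1`.
-/

open Filter Finset Topology fwdDiff

theorem fwdDiff_iter_comp_addMonoidHom {M M' G : Type*} [AddCommMonoid M] [AddCommMonoid M']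
    [AddCommGroup G] (L : M →+ M') (f : M' → G) (h : M) (n : ℕ) :
    Δ_[h] ^[n] (f ∘ L) = Δ_[L h] ^[n] f ∘ L := by
  funext y
  simp [fwdDiff_iter_eq_sum_shift]

theorem fwdDiff_iter_add_mul_pow_eq_zero {R : Type*} [CommRing R] (a b : R) (N : ℕ) :
    Δ_[1] ^[N + 1] (fun k : ℕ ↦ (a + k * b) ^ N) = 0 := by
  have hpoly : (fun r : R ↦ (a + r * b) ^ N) =
      fun r ↦ ∑ m ∈ range (N + 1), (b ^ m * a ^ (N - m) * N.choose m) * r ^ m := by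
    funext r
    rw [add_comm, add_pow]
    exact sum_congr rfl fun m _ ↦ by ring
  change Δ_[1] ^[N + 1] ((fun r : R ↦ (a + r * b) ^ N) ∘ Nat.castAddMonoidHom R) = 0
  rw [fwdDiff_iter_comp_addMonoidHom, Nat.coe_castAddMonoidHom, Nat.cast_one, hpoly,
    fwdDiff_iter_sum_mul_pow_eq_zero]
  rfl

theorem shift_eq_sum_fwdDiff_iter_of_fwdDiff_iter_eq_zero {M G : Type*} [AddCommMonoid M]
    [AddCommGroup G] {h : M} {f : M → G} {N : ℕ} (hf : Δ_[h] ^[N + 1] f = 0) (n : ℕ) (y : M) :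
    f (y + n • h) = ∑ i ∈ range (N + 1), n.choose i • Δ_[h] ^[i] f y := by
  have hvanish : ∀ i, N < i → Δ_[h] ^[i] f = 0 := fun i hi ↦ by
    obtain ⟨m, rfl⟩ := Nat.exists_eq_add_of_le hi
    rw [add_comm, Function.iterate_add_apply, hf]
    exact Function.iterate_fixed (fwdDiff_const h 0) m
  have hzero : ∀ i, min n N < i → n.choose i • Δ_[h] ^[i] f y = 0 := fun i hi ↦ by
    rcases min_lt_iff.mp hi with hn | hN
    · rw [Nat.choose_eq_zero_of_lt hn, zero_smul]
    · rw [hvanish i hN, Pi.zero_apply, smul_zero]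
  rw [shift_eq_sum_fwdDiff_iter h f n y]
  rcases le_total n N with hle | hle
  · exact sum_subset (range_subset_range.2 (by omega)) fun i _ hi ↦
      hzero i (by simp only [mem_range] at hi; omega)
  · exact (sum_subset (range_subset_range.2 (by omega)) fun i _ hi ↦
      hzero i (by simp only [mem_range] at hi; omega)).symm

theorem sum_choose_mul_choose_mul_pow_mul_pow {R : Type*} [CommSemiring R] (x y : R) (n i : ℕ) :
    ∑ k ∈ range (n + 1), (n.choose k * k.choose i : R) * x ^ k * y ^ (n - k)
      = n.choose i * x ^ i * (x + y) ^ (n - i) := by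
  rcases le_or_gt i n with hin | hni
  · obtain ⟨m, rfl⟩ := Nat.exists_eq_add_of_le hin
    rw [show i + m + 1 = i + (m + 1) by ring, sum_range_add,
      sum_eq_zero fun k hk ↦ by rw [Nat.choose_eq_zero_of_lt (mem_range.1 hk)]; simp,
      zero_add, Nat.add_sub_cancel_left, add_pow, mul_sum]
    refine sum_congr rfl fun l _ ↦ ?_
    rw [← Nat.cast_mul, Nat.choose_mul (Nat.le_add_right i l), Nat.add_sub_cancel_left,
      Nat.add_sub_cancel_left, Nat.sub_add_eq, Nat.add_sub_cancel_left]
    push_cast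
    ring
  · rw [Nat.choose_eq_zero_of_lt hni, sum_eq_zero fun k hk ↦ ?_]
    · simp
    · rw [Nat.choose_eq_zero_of_lt (by rw [mem_range] at hk; omega : k < i)]
      simp

theorem fwdDiff_iter_pow_mul_choose_apply_zero {R : Type*} [CommRing R] (x : R) (n i : ℕ) :
    Δ_[1] ^[n] (fun k : ℕ ↦ x ^ k * k.choose i) 0 = n.choose i * x ^ i * (x - 1) ^ (n - i) := by
  rw [fwdDiff_iter_eq_sum_shift, sub_eq_add_neg, ← sum_choose_mul_choose_mul_pow_mul_pow]
  refine sum_congr rfl fun k _ ↦ ?_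
  simp only [zero_add, nsmul_eq_mul, mul_one, zsmul_eq_mul]
  push_cast
  ring

theorem fwdDiff_iter_pow_mul_apply_zero {R : Type*} [CommRing R] (x : R) {f : ℕ → R} {N : ℕ}
    (hf : Δ_[1] ^[N + 1] f = 0) (n : ℕ) :
    Δ_[1] ^[n] (fun k : ℕ ↦ x ^ k * f k) 0
      = ∑ i ∈ range (N + 1), Δ_[1] ^[i] f 0 * x ^ i * (n.choose i * (x - 1) ^ (n - i)) := by
  have hnewton : (fun k : ℕ ↦ x ^ k * f k)
      = ∑ i ∈ range (N + 1), Δ_[1] ^[i] f 0 • fun k : ℕ ↦ x ^ k * k.choose i := by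
    funext k
    have := shift_eq_sum_fwdDiff_iter_of_fwdDiff_iter_eq_zero hf k 0
    rw [zero_add, smul_eq_mul, mul_one] at this
    rw [Finset.sum_apply, this, mul_sum]
    refine sum_congr rfl fun i _ ↦ ?_
    simp only [Pi.smul_apply, smul_eq_mul, nsmul_eq_mul]
    ring
  rw [hnewton, fwdDiff_iter_finsetSum, Finset.sum_apply]
  refine sum_congr rfl fun i _ ↦ ?_
  rw [fwdDiff_iter_const_smul, Pi.smul_apply, fwdDiff_iter_pow_mul_choose_apply_zero, smul_eq_mul]
  ring

theorem tendsto_choose_mul_pow_sub_atTop_zero {R : Type*} [NormedRing R] [HasSummableGeomSeries R]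
    (i : ℕ) {r : R} (hr : ‖r‖ < 1) :
    Tendsto (fun n ↦ (n.choose i : R) * r ^ (n - i)) atTop (𝓝 0) := by
  rw [← tendsto_add_atTop_iff_nat i]
  simpa using (summable_choose_mul_geometric_of_norm_lt_one i hr).tendsto_atTop_zero

theorem Complex.norm_exp_neg_ofReal_sub_one_lt_one_s14 {t : ℝ} (ht : 0 ≤ t) :
    ‖Complex.exp (-t) - 1‖ < 1 := by
  rw [← Complex.ofReal_neg, ← Complex.ofReal_exp, ← Complex.ofReal_one, ← Complex.ofReal_sub,
    Complex.norm_real, Real.norm_eq_abs, abs_sub_lt_iff]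
  constructor <;> linarith [Real.exp_pos (-t), Real.exp_le_one_iff.2 (neg_nonpos.2 ht)]

theorem forward_difference_exp_poly_tendsto_zero
    (c h : ℝ) (hc : 0 ≤ c) (hh : 0 < h) (z : ℂ) (N : ℕ) :
    Tendsto (fun n : ℕ =>
        ∑ k ∈ Finset.range (n + 1),
          (n.choose k : ℂ) * (-1) ^ (n - k)
            * Complex.exp (-(c : ℂ) * (z + (k : ℂ) * (h : ℂ)))
            * (z + (k : ℂ) * (h : ℂ)) ^ N)
      atTop (nhds 0) := by
  set x := Complex.exp (-(c : ℂ) * h)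
  have hx : ‖x - 1‖ < 1 := by
    simpa [x] using Complex.norm_exp_neg_ofReal_sub_one_lt_one_s14 (mul_nonneg hc hh.le)
  have hexp (k : ℕ) : Complex.exp (-(c : ℂ) * (z + k * h)) = Complex.exp (-c * z) * x ^ k := by
    rw [← Complex.exp_nat_mul, ← Complex.exp_add]
    ring_nf
  have hdiff (n : ℕ) : ∑ k ∈ Finset.range (n + 1), (n.choose k : ℂ) * (-1) ^ (n - k)
        * Complex.exp (-(c : ℂ) * (z + (k : ℂ) * (h : ℂ))) * (z + (k : ℂ) * (h : ℂ)) ^ N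
      = Complex.exp (-c * z) * Δ_[1] ^[n] (fun k : ℕ ↦ x ^ k * (z + k * h) ^ N) 0 := by
    rw [fwdDiff_iter_eq_sum_shift, mul_sum]
    refine sum_congr rfl fun k _ ↦ ?_
    simp only [zero_add, smul_eq_mul, mul_one, zsmul_eq_mul, hexp]
    push_cast
    ring
  simp_rw [hdiff, fwdDiff_iter_pow_mul_apply_zero x (fwdDiff_iter_add_mul_pow_eq_zero z h N)]
  have hterm := fun i (_ : i ∈ range (N + 1)) ↦
    (tendsto_choose_mul_pow_sub_atTop_zero i hx).const_mul
      (Δ_[1] ^[i] (fun k : ℕ ↦ (z + k * h) ^ N) 0 * x ^ i)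
  simpa using (tendsto_finsetSum _ hterm).const_mul (Complex.exp (-c * z))
end

section
/- Let m : ℝ → ℂ be Lebesgue measurable and let z₀ ∈ ℂ be such that t ↦ e^{-z₀ t} m(t) is Lebesgue integrable on (0,∞). Then for every z ∈ ℂ with Re(z) > Re(z₀), the series ∑_{k=0}^{∞} C(z − z₀, k) ∫₀^∞ (e^{-t} − 1)^k e^{-z₀ t} m(t) dt converges and its sum equals ∫₀^∞ e^{-z t} m(t) dt. -/
/-!
With `w = z - z₀` and `x t = e^{-t} - 1`, which has norm `< 1` for `t ≥ 0`, the binomial series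
gives `e^{-w t} = (1 + x t) ^ w = ∑ C(w, k) (x t) ^ k`, so the claim is an interchange of sum and
integral. Because `‖x t‖ ≤ 1`, the partial sums are dominated by `(∑ ‖C(w, k)‖) ‖e^{-z₀ t} m t‖`.
The coefficient series converges for `0 < re w`: for `w ∉ ℕ`, Euler's limit formula
`GammaSeq (-w) n → Γ(-w) ≠ 0` turns `‖C(w, n + 1)‖ = n ^ (-re w) / ((n + 1) ‖GammaSeq (-w) n‖)`
into `O(n ^ (-1 - re w))`, and for `w ∈ ℕ` it is a finite sum.
-/

open MeasureTheory Filter Finset Topology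

noncomputable section

open Asymptotics Complex

theorem hasSum_mul_integral_pow_mul {𝕜 α : Type*} [RCLike 𝕜] [MeasurableSpace α] {μ : Measure α}
    {c : ℕ → 𝕜} (hc : Summable fun k => ‖c k‖) {x f g : α → 𝕜} (hx : AEStronglyMeasurable x μ)
    (hx_le : ∀ᵐ a ∂μ, ‖x a‖ ≤ 1) (hf : Integrable f μ)
    (hg : ∀ᵐ a ∂μ, HasSum (fun k => c k * x a ^ k) (g a)) :
    HasSum (fun k => c k * ∫ a, x a ^ k * f a ∂μ) (∫ a, g a * f a ∂μ) := by
  simp_rw [← integral_const_mul]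
  refine hasSum_integral_of_dominated_convergence (fun k a => ‖c k‖ * ‖f a‖)
    (fun k => ((hx.pow k).mul hf.1).const_mul (c k)) (fun k => hx_le.mono fun a ha => ?_)
    (ae_of_all _ fun a => hc.mul_right _) ?_
    (hg.mono fun a ha => by simpa only [mul_assoc] using ha.mul_right (f a))
  · rw [norm_mul, norm_mul, norm_pow]
    gcongr
    exact mul_le_of_le_one_left (norm_nonneg _) (pow_le_one₀ (norm_nonneg _) ha)
  · simp_rw [tsum_mul_right]
    exact hf.norm.const_mul _

lemma genBinom_eq_choose (w : ℂ) (k : ℕ) : genBinom w k = Ring.choose w k := by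
  rw [genBinom, Ring.choose_eq_smul, ← Polynomial.aeval_eq_smeval, Polynomial.aeval_def,
    Polynomial.eval₂_eq_eval_map, descPochhammer_map, descPochhammer_eval_eq_prod_range,
    smul_eq_mul, div_eq_inv_mul]

lemma hasSum_genBinom_mul_pow (w : ℂ) {x : ℂ} (hx : ‖x‖ < 1) :
    HasSum (fun k => genBinom w k * x ^ k) ((1 + x) ^ w) := by
  have hx' : x ∈ Metric.eball (0 : ℂ) 1 := by
    simpa [← ofReal_norm, ENNReal.ofReal_lt_one] using hx
  have h := one_add_cpow_hasFPowerSeriesOnBall_zero (a := w) |>.hasSum hx'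
  simp only [binomialSeries, FormalMultilinearSeries.ofScalars_apply_eq, smul_eq_mul,
    zero_add] at h
  simpa only [genBinom_eq_choose] using h

lemma norm_genBinom_succ {w : ℂ} (hw : ∀ k : ℕ, w ≠ k) {n : ℕ} (hn : n ≠ 0) :
    ‖genBinom w (n + 1)‖ = (n : ℝ) ^ (-w.re) / (n + 1) * ‖GammaSeq (-w) n‖⁻¹ := by
  have hprod : ∏ j ∈ range (n + 1), ‖(j : ℂ) - w‖ ≠ 0 :=
    prod_ne_zero_iff.2 fun j _ h => hw j (sub_eq_zero.1 (norm_eq_zero.1 h)).symm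
  simp only [genBinom, GammaSeq, neg_add_eq_sub, norm_div, norm_mul, norm_prod, norm_sub_rev w,
    norm_natCast_cpow_of_pos (Nat.pos_of_ne_zero hn), neg_re, Nat.factorial_succ, Nat.cast_mul,
    norm_natCast]
  push_cast
  field_simp

lemma isBigO_norm_genBinom_succ {w : ℂ} (hw : ∀ k : ℕ, w ≠ k) :
    (fun n => ‖genBinom w (n + 1)‖) =O[atTop] fun n : ℕ => (n : ℝ) ^ (-(1 + w.re)) := by
  have hΓ : Tendsto (fun n => ‖GammaSeq (-w) n‖⁻¹) atTop (𝓝 ‖Gamma (-w)‖⁻¹) :=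
    (GammaSeq_tendsto_Gamma _).norm.inv₀
      (norm_ne_zero_iff.2 (Gamma_ne_zero fun m h => hw m (neg_inj.1 h)))
  have hpow : (fun n : ℕ => (n : ℝ) ^ (-w.re) / (n + 1)) =O[atTop]
      fun n : ℕ => (n : ℝ) ^ (-(1 + w.re)) := by
    refine IsBigO.of_bound 1 ?_
    filter_upwards [eventually_gt_atTop 0] with n hn
    have hn' : (0 : ℝ) < n := Nat.cast_pos.2 hn
    rw [Real.norm_of_nonneg (by positivity), Real.norm_of_nonneg (by positivity), one_mul,
      neg_add, Real.rpow_add hn', Real.rpow_neg_one, mul_comm, ← div_eq_mul_inv]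
    exact div_le_div_of_nonneg_left (by positivity) hn' (by linarith)
  refine (hpow.mul (hΓ.isBigO_one ℝ)).congr' ?_ (.of_forall fun n => mul_one _)
  filter_upwards [eventually_ne_atTop 0] with n hn
  exact (norm_genBinom_succ hw hn).symm

lemma summable_norm_genBinom {w : ℂ} (hw : 0 < w.re) : Summable fun k => ‖genBinom w k‖ := by
  by_cases hnat : ∃ N : ℕ, w = N
  · obtain ⟨N, rfl⟩ := hnat
    refine summable_of_ne_finset_zero (s := range (N + 1)) fun k hk => ?_
    rw [genBinom_eq_choose, Ring.choose_natCast, Nat.choose_eq_zero_of_lt (by simpa using hk)]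
    simp
  · push Not at hnat
    rw [← summable_nat_add_iff 1]
    exact summable_of_isBigO_nat (Real.summable_nat_rpow.2 (by linarith))
      (isBigO_norm_genBinom_succ hnat)

lemma norm_cexp_neg_sub_one_lt_one {t : ℝ} (ht : 0 ≤ t) : ‖cexp (-t) - 1‖ < 1 := by
  rw [← ofReal_neg, ← ofReal_exp, ← ofReal_one, ← ofReal_sub, norm_real, Real.norm_eq_abs,
    abs_sub_lt_iff]
  constructor <;> linarith [Real.exp_pos (-t), Real.exp_le_one_iff.2 (neg_nonpos.2 ht)]

lemma cexp_neg_ofReal_cpow (t : ℝ) (w : ℂ) : cexp (-t) ^ w = cexp (-(w * t)) := by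
  rw [cpow_def_of_ne_zero (exp_ne_zero _), ← ofReal_neg, ← ofReal_exp,
    ← ofReal_log (Real.exp_pos _).le, Real.log_exp]
  push_cast
  ring_nf

theorem newton_series_interchange_step_general
    (m : ℝ → ℂ) (z₀ : ℂ)
    (hint : IntegrableOn (fun t : ℝ => Complex.exp (-z₀ * t) * m t) (Set.Ioi 0))
    (z : ℂ) (hz : z₀.re < z.re) :
    Tendsto (fun n : ℕ =>
        ∑ k ∈ Finset.range n, genBinom (z - z₀) k *
          ∫ t in Set.Ioi (0 : ℝ),
            (Complex.exp (-(t : ℂ)) - 1) ^ k * Complex.exp (-z₀ * t) * m t)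
      atTop (nhds (∫ t in Set.Ioi (0 : ℝ), Complex.exp (-z * t) * m t)) := by
  have hw : 0 < (z - z₀).re := by rw [sub_re]; linarith
  have hx : ∀ᵐ t : ℝ ∂(volume.restrict (Set.Ioi (0 : ℝ))), ‖cexp (-(t : ℂ)) - 1‖ < 1 :=
    (ae_restrict_mem measurableSet_Ioi).mono fun t ht => norm_cexp_neg_sub_one_lt_one ht.le
  have key := hasSum_mul_integral_pow_mul (summable_norm_genBinom hw)
    (by fun_prop : Continuous fun t : ℝ => cexp (-(t : ℂ)) - 1).aestronglyMeasurable
    (hx.mono fun t ht => ht.le) hint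
    (hx.mono fun t ht => by
      simpa only [add_sub_cancel, cexp_neg_ofReal_cpow] using hasSum_genBinom_mul_pow _ ht)
  have hlim : ∀ t : ℝ, cexp (-((z - z₀) * t)) * (cexp (-z₀ * t) * m t) = cexp (-z * t) * m t :=
    fun t => by rw [← mul_assoc, ← exp_add]; ring_nf
  simpa only [hlim, mul_assoc] using key.tendsto_sum_nat

theorem newton_series_interchange_step
    (m : ℝ → ℂ) (hm : Measurable m) (z₀ : ℂ)
    (hint : IntegrableOn (fun t : ℝ => Complex.exp (-z₀ * t) * m t) (Set.Ioi 0))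
    (z : ℂ) (hz : z₀.re < z.re) :
    Tendsto (fun n : ℕ =>
        ∑ k ∈ Finset.range n, genBinom (z - z₀) k *
          ∫ t in Set.Ioi (0 : ℝ),
            (Complex.exp (-(t : ℂ)) - 1) ^ k * Complex.exp (-z₀ * t) * m t)
      atTop (nhds (∫ t in Set.Ioi (0 : ℝ), Complex.exp (-z * t) * m t)) :=
  newton_series_interchange_step_general m z₀ hint z hz
end
end
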